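/- arXiv:1702.08867 — 9 statements merged into one kernel-verified Lean document; each statement's English description precedes it below -/
import Mathlib

section
/- (Van Loan block-exponential formula.) Let A be an n×n real matrix, D an m×m real matrix, and B an n×m real matrix. For every real t ≥ 0, the upper-right n×m block of exp(t · [[A, B],[0, D]]) (the block matrix with A and D on the diagonal, B in the upper-right block and 0 in the lower-left block) equals the matrix-valued integral ∫_0^t exp((t−u)·A) · B · exp(u·D) du. -/
set_option autoImplicit false
set_option maxHeartbeats 1000000

open Matrix

namespace VanLoanAux

open MeasureTheory NormedSpace intervalIntegral

section Generic

variable {N M : Type*} [Fintype N] [Fintype M]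

/-- Entry evaluation as a linear map. -/
def entryLM (i : N) (j : M) : Matrix N M ℝ →ₗ[ℝ] ℝ where
  toFun X := X i j
  map_add' _ _ := rfl
  map_smul' _ _ := rfl

end Generic

section Linfty

attribute [local instance] Matrix.linftyOpNormedAddCommGroup Matrix.linftyOpNormedSpace
  Matrix.linftyOpNormedRing Matrix.linftyOpNormedAlgebra

variable {n m : ℕ}

noncomputable def linftyENorm (n m : ℕ) : ENormedAddMonoid (Matrix (Fin n) (Fin m) ℝ) :=
  NormedAddGroup.toENormedAddMonoid

attribute [local instance] linftyENorm

theorem integral_entry (f : ℝ → Matrix (Fin n) (Fin m) ℝ) (a b : ℝ)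
    (hf : IntervalIntegrable f MeasureTheory.volume a b) (i : Fin n) (j : Fin m) :
    (∫ u in a..b, f u) i j = ∫ u in a..b, f u i j := by
  have h := (LinearMap.toContinuousLinearMap (entryLM i j)).intervalIntegral_comp_comm hf
  exact h.symm

/-- Multiplication of rectangular matrices as a continuous bilinear map. -/
noncomputable def mulCLM (n m : ℕ) :
    Matrix (Fin n) (Fin n) ℝ →L[ℝ] Matrix (Fin n) (Fin m) ℝ →L[ℝ] Matrix (Fin n) (Fin m) ℝ :=
  LinearMap.toContinuousLinearMap
    { toFun := fun X => LinearMap.toContinuousLinearMap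
        { toFun := fun Y => X * Y
          map_add' := fun _ _ => Matrix.mul_add _ _ _
          map_smul' := fun _ _ => Matrix.mul_smul _ _ _ }
      map_add' := fun X X' => by
        ext Y i j
        simp [Matrix.add_mul]
      map_smul' := fun c X => by
        ext Y i j
        simp [Matrix.smul_mul] }

@[simp] theorem mulCLM_apply (X : Matrix (Fin n) (Fin n) ℝ) (Y : Matrix (Fin n) (Fin m) ℝ) :
    mulCLM n m X Y = X * Y := by
  simp [mulCLM]

theorem hasDerivAt_matmul {f : ℝ → Matrix (Fin n) (Fin n) ℝ} {g : ℝ → Matrix (Fin n) (Fin m) ℝ}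
    {f' : Matrix (Fin n) (Fin n) ℝ} {g' : Matrix (Fin n) (Fin m) ℝ} {t : ℝ}
    (hf : HasDerivAt f f' t) (hg : HasDerivAt g g' t) :
    HasDerivAt (fun s => f s * g s) (f' * g t + f t * g') t := by
  have hc := (mulCLM n m).hasDerivAt_of_bilinear (fun _ => hf) (fun _ => hg)
  have h2 : HasDerivAt (fun s => f s * g s) (f t * g' + f' * g t) t := hc
  rw [add_comm] at h2
  exact h2

/-- Block-insertion continuous linear maps. -/
noncomputable def bCLM₁₁ (n m : ℕ) :
    Matrix (Fin n) (Fin n) ℝ →L[ℝ] Matrix (Fin n ⊕ Fin m) (Fin n ⊕ Fin m) ℝ :=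
  LinearMap.toContinuousLinearMap
    { toFun := fun X => fromBlocks X 0 0 0
      map_add' := fun X Y => by ext (i | i) (j | j) <;> simp
      map_smul' := fun c X => by ext (i | i) (j | j) <;> simp }

noncomputable def bCLM₁₂ (n m : ℕ) :
    Matrix (Fin n) (Fin m) ℝ →L[ℝ] Matrix (Fin n ⊕ Fin m) (Fin n ⊕ Fin m) ℝ :=
  LinearMap.toContinuousLinearMap
    { toFun := fun X => fromBlocks 0 X 0 0
      map_add' := fun X Y => by ext (i | i) (j | j) <;> simp
      map_smul' := fun c X => by ext (i | i) (j | j) <;> simp }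

noncomputable def bCLM₂₂ (n m : ℕ) :
    Matrix (Fin m) (Fin m) ℝ →L[ℝ] Matrix (Fin n ⊕ Fin m) (Fin n ⊕ Fin m) ℝ :=
  LinearMap.toContinuousLinearMap
    { toFun := fun X => fromBlocks 0 0 0 X
      map_add' := fun X Y => by ext (i | i) (j | j) <;> simp
      map_smul' := fun c X => by ext (i | i) (j | j) <;> simp }

@[simp] theorem bCLM₁₁_apply (X : Matrix (Fin n) (Fin n) ℝ) :
    bCLM₁₁ n m X = fromBlocks X 0 0 0 := by simp [bCLM₁₁]
@[simp] theorem bCLM₁₂_apply (X : Matrix (Fin n) (Fin m) ℝ) :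
    bCLM₁₂ n m X = fromBlocks 0 X 0 0 := by simp [bCLM₁₂]
@[simp] theorem bCLM₂₂_apply (X : Matrix (Fin m) (Fin m) ℝ) :
    bCLM₂₂ n m X = fromBlocks 0 0 0 X := by simp [bCLM₂₂]

variable (A : Matrix (Fin n) (Fin n) ℝ) (D : Matrix (Fin m) (Fin m) ℝ)
  (B : Matrix (Fin n) (Fin m) ℝ)

/-- The integrand for the auxiliary integral. -/
noncomputable def intg (u : ℝ) : Matrix (Fin n) (Fin m) ℝ :=
  exp ((-u) • A) * B * exp (u • D)

theorem cont_intg : Continuous (intg A D B) := by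
  apply Continuous.matrix_mul
  · exact Continuous.matrix_mul
      (exp_continuous.comp (continuous_neg.smul continuous_const)) continuous_const
  · exact exp_continuous.comp (continuous_id.smul continuous_const)

/-- The running integral. -/
noncomputable def Xint (s : ℝ) : Matrix (Fin n) (Fin m) ℝ :=
  ∫ u in (0:ℝ)..s, intg A D B u

theorem hasDerivAt_Xint (s : ℝ) : HasDerivAt (Xint A D B) (intg A D B s) s :=
  ((cont_intg A D B).integral_hasStrictDerivAt 0 s).hasDerivAt

theorem exp_smul_mul_exp_neg_smul (s : ℝ) : exp (s • A) * exp ((-s) • A) = 1 := by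
  have hc : Commute (s • A) ((-s) • A) := ((Commute.refl A).smul_right (-s)).smul_left s
  erw [← exp_add_of_commute hc, ← add_smul]
  simp [exp_zero]

/-- The candidate solution. -/
noncomputable def Φ (s : ℝ) : Matrix (Fin n ⊕ Fin m) (Fin n ⊕ Fin m) ℝ :=
  fromBlocks (exp (s • A)) (exp (s • A) * Xint A D B s) 0 (exp (s • D))

theorem hasDerivAt_Φ (s : ℝ) :
    HasDerivAt (Φ A D B) (fromBlocks A B 0 D * Φ A D B s) s := by
  have hEA : HasDerivAt (fun u : ℝ => exp (u • A)) (A * exp (s • A)) s :=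
    hasDerivAt_exp_smul_const' A s
  have hED : HasDerivAt (fun u : ℝ => exp (u • D)) (D * exp (s • D)) s :=
    hasDerivAt_exp_smul_const' D s
  have hY : HasDerivAt (fun u : ℝ => exp (u • A) * Xint A D B u)
      (A * (exp (s • A) * Xint A D B s) + B * exp (s • D)) s := by
    have h1 := hasDerivAt_matmul hEA (hasDerivAt_Xint A D B s)
    have h2 : exp (s • A) * intg A D B s = B * exp (s • D) := by
      rw [intg, ← Matrix.mul_assoc, ← Matrix.mul_assoc, exp_smul_mul_exp_neg_smul, Matrix.one_mul]
    rw [h2, Matrix.mul_assoc] at h1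
    exact h1
  have hΦ' : HasDerivAt (fun u => bCLM₁₁ n m (exp (u • A))
        + bCLM₁₂ n m (exp (u • A) * Xint A D B u) + bCLM₂₂ n m (exp (u • D)))
      (bCLM₁₁ n m (A * exp (s • A))
        + bCLM₁₂ n m (A * (exp (s • A) * Xint A D B s) + B * exp (s • D))
        + bCLM₂₂ n m (D * exp (s • D))) s := by
    exact (((bCLM₁₁ n m).hasFDerivAt.comp_hasDerivAt s hEA).add
      ((bCLM₁₂ n m).hasFDerivAt.comp_hasDerivAt s hY)).add
      ((bCLM₂₂ n m).hasFDerivAt.comp_hasDerivAt s hED)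
  have hfun : (fun u => bCLM₁₁ n m (exp (u • A))
        + bCLM₁₂ n m (exp (u • A) * Xint A D B u) + bCLM₂₂ n m (exp (u • D)))
      = Φ A D B := by
    funext u
    ext (i | i) (j | j) <;> simp [Φ]
  have hval : bCLM₁₁ n m (A * exp (s • A))
        + bCLM₁₂ n m (A * (exp (s • A) * Xint A D B s) + B * exp (s • D))
        + bCLM₂₂ n m (D * exp (s • D))
      = fromBlocks A B 0 D * Φ A D B s := by
    ext (i | i) (j | j) <;> simp [Φ, fromBlocks_multiply]
  rw [hfun, hval] at hΦ'
  exact hΦ'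

theorem Φ_eq_exp (t : ℝ) :
    Φ A D B t = exp (t • fromBlocks A B 0 D) := by
  set M := fromBlocks A B 0 D with hM
  have hΨ : ∀ s : ℝ, HasDerivAt (fun u => exp (u • (-M)) * Φ A D B u) 0 s := by
    intro s
    have h := (hasDerivAt_exp_smul_const' (-M) s).mul (hasDerivAt_Φ A D B s)
    have hc0 : Commute M (-M) := (Commute.refl M).neg_right
    have hc1 : Commute M (s • (-M)) := hc0.smul_right s
    have hc : Commute M (exp (s • (-M))) := hc1.exp_right
    have h' : HasDerivAt (fun u => exp (u • (-M)) * Φ A D B u)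
        (-M * exp (s • -M) * Φ A D B s + exp (s • -M) * (fromBlocks A B 0 D * Φ A D B s)) s := h
    convert h' using 1
    rw [neg_mul, neg_mul, ← mul_assoc, ← hc.eq, mul_assoc]
    abel
  have hconst : ∀ s : ℝ, exp (s • (-M)) * Φ A D B s = exp ((0:ℝ) • (-M)) * Φ A D B 0 :=
    fun s => is_const_of_deriv_eq_zero (fun u => (hΨ u).differentiableAt)
      (fun u => (hΨ u).deriv) s 0
  have hΦ0 : Φ A D B 0 = 1 := by
    rw [Φ, Xint, intervalIntegral.integral_same]
    simp [exp_zero, fromBlocks_one]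
  have h1 : exp (t • (-M)) * Φ A D B t = 1 := by
    rw [hconst t, hΦ0, mul_one, zero_smul, exp_zero]
  have h2 : exp (t • M) * exp (t • (-M)) = 1 := by
    have hc0 : Commute M (-M) := (Commute.refl M).neg_right
    have hc1 : Commute (t • M) (t • (-M)) := (hc0.smul_right t).smul_left t
    erw [← exp_add_of_commute hc1, ← smul_add, add_neg_cancel, smul_zero, exp_zero]
  calc Φ A D B t = 1 * Φ A D B t := (one_mul _).symm
    _ = exp (t • M) * exp (t • (-M)) * Φ A D B t := by rw [h2]
    _ = exp (t • M) * (exp (t • (-M)) * Φ A D B t) := by rw [mul_assoc]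
    _ = exp (t • M) := by rw [h1, mul_one]

theorem cont_full (t : ℝ) :
    Continuous fun u : ℝ => exp ((t - u) • A) * B * exp (u • D) := by
  apply Continuous.matrix_mul
  · exact Continuous.matrix_mul
      (exp_continuous.comp ((continuous_const.sub continuous_id).smul continuous_const))
      continuous_const
  · exact exp_continuous.comp (continuous_id.smul continuous_const)

theorem key (t : ℝ) (i : Fin n) (j : Fin m) :
    (exp (t • fromBlocks A B 0 D)).toBlocks₁₂ i j
      = ∫ u in (0:ℝ)..t, (exp ((t - u) • A) * B * exp (u • D)) i j := by
  have hblock : (exp (t • fromBlocks A B 0 D)).toBlocks₁₂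
      = exp (t • A) * Xint A D B t := by
    rw [← Φ_eq_exp]
    simp [Φ]
  have hpull : exp (t • A) * Xint A D B t
      = ∫ u in (0:ℝ)..t, exp (t • A) * intg A D B u := by
    have h := (mulCLM n m (exp (t • A))).intervalIntegral_comp_comm
      ((cont_intg A D B).intervalIntegrable (μ := MeasureTheory.volume) 0 t)
    exact h.symm
  have hcongr : ∀ u : ℝ, exp (t • A) * intg A D B u
      = exp ((t - u) • A) * B * exp (u • D) := by
    intro u
    have hc : Commute (t • A) ((-u) • A) := ((Commute.refl A).smul_right (-u)).smul_left t
    erw [intg, ← Matrix.mul_assoc, ← Matrix.mul_assoc, ← exp_add_of_commute hc, ← add_smul,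
      ← sub_eq_add_neg]
    rfl
  rw [hblock, hpull]
  rw [intervalIntegral.integral_congr (fun u _ => hcongr u)]
  exact integral_entry _ 0 t ((cont_full A D B t).intervalIntegrable 0 t) i j

end Linfty

end VanLoanAux

attribute [local instance] Matrix.normedAddCommGroup Matrix.normedSpace

/-- The matrix exponential of a real square matrix. -/
noncomputable def mexp {n : Type*} [Fintype n] [DecidableEq n] (A : Matrix n n ℝ) :
    Matrix n n ℝ :=
  NormedSpace.exp A

noncomputable def supENorm (n m : ℕ) : ENormedAddMonoid (Matrix (Fin n) (Fin m) ℝ) :=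
  NormedAddGroup.toENormedAddMonoid

attribute [local instance] supENorm

theorem integral_entry' {n m : ℕ} (f : ℝ → Matrix (Fin n) (Fin m) ℝ) (a b : ℝ)
    (hf : IntervalIntegrable f MeasureTheory.volume a b) (i : Fin n) (j : Fin m) :
    (∫ u in a..b, f u) i j = ∫ u in a..b, f u i j := by
  have h := (LinearMap.toContinuousLinearMap
    (VanLoanAux.entryLM i j)).intervalIntegral_comp_comm hf
  exact h.symm

/-- Van Loan's block-exponential formula: the upper-right `n×m` block of
`exp (t • [[A, B],[0, D]])` equals `∫_0^t exp((t-u) • A) * B * exp(u • D) du`. -/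
theorem vanLoan_block_exp {n m : ℕ} (A : Matrix (Fin n) (Fin n) ℝ)
    (D : Matrix (Fin m) (Fin m) ℝ) (B : Matrix (Fin n) (Fin m) ℝ) (t : ℝ) (ht : 0 ≤ t) :
    (mexp (t • Matrix.fromBlocks A B 0 D)).toBlocks₁₂
      = ∫ u in (0:ℝ)..t, mexp ((t - u) • A) * B * mexp (u • D) := by
  have hcont : Continuous fun u : ℝ => mexp ((t - u) • A) * B * mexp (u • D) :=
    VanLoanAux.cont_full A D B t
  ext i j
  rw [integral_entry' _ 0 t (hcont.intervalIntegrable 0 t) i j]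
  exact VanLoanAux.key A D B t i j
end

section
/- (Parameter differentiation of the matrix exponential, Wilcox/Tsai–Chan identity.) Let A and B be n×n real matrices and t ≥ 0 a real number. Then the map s ↦ exp(t·(A + s·B)) from ℝ to n×n real matrices is differentiable at every point s₀, with derivative equal to ∫_0^t exp((t−u)·(A + s₀·B)) · B · exp(u·(A + s₀·B)) du. -/
/-!
Differentiating `u ↦ exp ((t - u) • X) * exp (u • Y)` gives Duhamel's formula
`exp (t • Y) - exp (t • X) = ∫ u in 0..t, exp ((t - u) • X) * (Y - X) * exp (u • Y)`.
For `X = A + s₀ • B` and `Y = A + s • B` we have `Y - X = (s - s₀) • B`, so the difference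
quotient at `s₀` is `∫ u in 0..t, exp ((t - u) • X) * B * exp (u • (A + s • B))`, which is
continuous in `s` and hence tends to its value at `s₀`.
-/

set_option autoImplicit false

open Matrix

attribute [local instance] Matrix.normedAddCommGroup Matrix.normedSpace

open NormedSpace Filter Topology

section BanachAlgebra

variable {𝔸 : Type*} [NormedRing 𝔸] [NormedAlgebra ℝ 𝔸] [CompleteSpace 𝔸]

@[fun_prop]
theorem exp_continuous_of_normedAlgebra_real : Continuous (exp : 𝔸 → 𝔸) :=
  letI := NormedAlgebra.restrictScalars ℚ ℝ 𝔸
  exp_continuous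

theorem hasDerivAt_exp_smul_mul_exp_smul (X Y : 𝔸) (t u : ℝ) :
    HasDerivAt (fun u : ℝ => exp ((t - u) • X) * exp (u • Y))
      (exp ((t - u) • X) * (Y - X) * exp (u • Y)) u := by
  have hX : HasDerivAt (fun u : ℝ => exp ((t - u) • X)) (-(X * exp ((t - u) • X))) u := by
    simpa [Function.comp_def] using (hasDerivAt_exp_smul_const' (𝕂 := ℝ) X (t - u)).scomp u
      ((hasDerivAt_id u).const_sub t)
  refine (hX.mul (hasDerivAt_exp_smul_const' (𝕂 := ℝ) Y u)).congr_deriv ?_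
  rw [((Commute.refl X).smul_right (t - u)).exp_right.eq]
  noncomm_ring

theorem exp_smul_sub_exp_smul_eq_intervalIntegral (X Y : 𝔸) (t : ℝ) :
    exp (t • Y) - exp (t • X) = ∫ u in (0 : ℝ)..t, exp ((t - u) • X) * (Y - X) * exp (u • Y) := by
  have hcont : Continuous fun u : ℝ => exp ((t - u) • X) * (Y - X) * exp (u • Y) := by
    fun_prop
  rw [intervalIntegral.integral_eq_sub_of_hasDerivAt
    (fun u _ => hasDerivAt_exp_smul_mul_exp_smul X Y t u) (hcont.intervalIntegrable 0 t)]
  simp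

theorem hasDerivAt_exp_smul_add_smul (A B : 𝔸) (t s₀ : ℝ) :
    HasDerivAt (fun s : ℝ => exp (t • (A + s • B)))
      (∫ u in (0 : ℝ)..t, exp ((t - u) • (A + s₀ • B)) * B * exp (u • (A + s₀ • B))) s₀ := by
  set C := A + s₀ • B
  set I : ℝ → 𝔸 := fun s => ∫ u in (0 : ℝ)..t, exp ((t - u) • C) * B * exp (u • (A + s • B))
  have hI : Continuous I :=
    intervalIntegral.continuous_parametric_intervalIntegral_of_continuous' (by fun_prop) 0 t
  have hslope : ∀ s, s ≠ s₀ → slope (fun s : ℝ => exp (t • (A + s • B))) s₀ s = I s := by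
    intro s hs
    have hdiff : A + s • B - C = (s - s₀) • B := by simp only [C]; module
    rw [slope_def_module, exp_smul_sub_exp_smul_eq_intervalIntegral, hdiff]
    simp only [smul_mul_assoc, mul_smul_comm, intervalIntegral.integral_smul, I]
    rw [smul_smul, inv_mul_cancel₀ (sub_ne_zero.2 hs), one_smul]
  refine hasDerivAt_iff_tendsto_slope.2 ?_
  exact ((hI.tendsto s₀).mono_left nhdsWithin_le_nhds).congr'
    (eventually_nhdsWithin_of_forall fun s hs => (hslope s hs).symm)

end BanachAlgebra

theorem LinearMap.intervalIntegral_comp_comm {E F : Type*} [NormedAddCommGroup E]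
    [NormedSpace ℝ E] [FiniteDimensional ℝ E] [NormedAddCommGroup F] [NormedSpace ℝ F]
    [CompleteSpace F] (L : E →ₗ[ℝ] F) {f : ℝ → E} {a b : ℝ}
    (hf : IntervalIntegrable f MeasureTheory.volume a b) :
    ∫ u in a..b, L (f u) = L (∫ u in a..b, f u) :=
  haveI := FiniteDimensional.complete ℝ E
  L.toContinuousLinearMap.intervalIntegral_comp_comm hf

section LinftyOpNorm

/- The entrywise sup norm on matrices is not submultiplicative, so the Banach-algebra results
are applied with the `L∞` operator norm, which induces the same topology; the two Bochner integrals
are then compared entry by entry. -/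
attribute [-instance] Matrix.normedAddCommGroup Matrix.normedSpace
attribute [local instance] Matrix.linftyOpNormedRing Matrix.linftyOpNormedAlgebra

variable {m : Type*} [Fintype m] [DecidableEq m]

theorem Matrix.continuous_exp_smul_mul_mul_exp_smul (X B Y : Matrix m m ℝ) (t : ℝ) :
    Continuous fun u : ℝ => exp ((t - u) • X) * B * exp (u • Y) := by
  fun_prop

theorem Matrix.tendsto_slope_exp_smul_add_smul (A B : Matrix m m ℝ) (t s₀ : ℝ) :
    Tendsto (slope (fun s : ℝ => exp (t • (A + s • B))) s₀) (𝓝[≠] s₀)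
      (𝓝 (Matrix.of fun i j => ∫ u in (0 : ℝ)..t,
        (exp ((t - u) • (A + s₀ • B)) * B * exp (u • (A + s₀ • B))) i j)) := by
  refine (hasDerivAt_exp_smul_add_smul A B t s₀).tendsto_slope.trans (le_of_eq (congrArg 𝓝 ?_))
  ext i j
  exact (LinearMap.intervalIntegral_comp_comm (Matrix.entryLinearMap ℝ ℝ i j)
    ((Matrix.continuous_exp_smul_mul_mul_exp_smul (A + s₀ • B) B _ t).intervalIntegrable 0 t)).symm

end LinftyOpNorm

theorem hasDerivAt_exp_param_general {n : ℕ} (A B : Matrix (Fin n) (Fin n) ℝ) (t : ℝ)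
    (s₀ : ℝ) :
    HasDerivAt (fun s : ℝ => mexp (t • (A + s • B)))
      (∫ u in (0:ℝ)..t, mexp ((t - u) • (A + s₀ • B)) * B * mexp (u • (A + s₀ • B))) s₀ := by
  refine hasDerivAt_iff_tendsto_slope.2 ?_
  refine (Matrix.tendsto_slope_exp_smul_add_smul A B t s₀).trans (le_of_eq (congrArg 𝓝 ?_))
  ext i j
  exact LinearMap.intervalIntegral_comp_comm (Matrix.entryLinearMap ℝ ℝ i j)
    ((Matrix.continuous_exp_smul_mul_mul_exp_smul (A + s₀ • B) B _ t).intervalIntegrable 0 t)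

/-- Wilcox/Tsai–Chan identity: the map `s ↦ exp (t • (A + s • B))` is differentiable at
every `s₀`, with derivative `∫_0^t exp((t-u) • (A + s₀ • B)) * B * exp(u • (A + s₀ • B)) du`. -/
theorem hasDerivAt_exp_param {n : ℕ} (A B : Matrix (Fin n) (Fin n) ℝ) (t : ℝ) (ht : 0 ≤ t)
    (s₀ : ℝ) :
    HasDerivAt (fun s : ℝ => mexp (t • (A + s • B)))
      (∫ u in (0:ℝ)..t, mexp ((t - u) • (A + s₀ • B)) * B * mexp (u • (A + s₀ • B))) s₀ :=
  hasDerivAt_exp_param_general A B t s₀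
end

section
/- (Derivative of the matrix exponential as a block of a doubled exponential.) Let A and B be n×n real matrices and t ≥ 0 a real number. Then the derivative at s₀ of the map s ↦ exp(t·(A + s·B)) equals the upper-right n×n block of exp(t · [[A + s₀·B, B],[0, A + s₀·B]]). -/
set_option autoImplicit false

open Matrix

attribute [local instance] Matrix.normedAddCommGroup Matrix.normedSpace

noncomputable def blockDiagRingHom (n : ℕ) :
    (Matrix (Fin n) (Fin n) ℝ × Matrix (Fin n) (Fin n) ℝ) →+*
      Matrix (Fin n ⊕ Fin n) (Fin n ⊕ Fin n) ℝ where
  toFun p := fromBlocks p.1 0 0 p.2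
  map_one' := fromBlocks_one
  map_mul' p q := by simp [fromBlocks_multiply]
  map_zero' := fromBlocks_zero
  map_add' p q := by simp [fromBlocks_add]

open NormedSpace in
lemma exp_fromBlocks_diag {n : ℕ} (X Z : Matrix (Fin n) (Fin n) ℝ) :
    exp (fromBlocks X 0 0 Z) = fromBlocks (exp X) 0 0 (exp Z) := by
  letI : SeminormedRing (Matrix (Fin n) (Fin n) ℝ) := Matrix.linftyOpSemiNormedRing
  letI : NormedRing (Matrix (Fin n) (Fin n) ℝ) := Matrix.linftyOpNormedRing
  letI : NormedAlgebra ℝ (Matrix (Fin n) (Fin n) ℝ) := Matrix.linftyOpNormedAlgebra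
  letI : SeminormedRing (Matrix (Fin n ⊕ Fin n) (Fin n ⊕ Fin n) ℝ) :=
    Matrix.linftyOpSemiNormedRing
  letI : NormedRing (Matrix (Fin n ⊕ Fin n) (Fin n ⊕ Fin n) ℝ) := Matrix.linftyOpNormedRing
  letI : NormedAlgebra ℝ (Matrix (Fin n ⊕ Fin n) (Fin n ⊕ Fin n) ℝ) :=
    Matrix.linftyOpNormedAlgebra
  letI : NormedAlgebra ℚ (Matrix (Fin n) (Fin n) ℝ) :=
    { (inferInstance : Algebra ℚ (Matrix (Fin n) (Fin n) ℝ)) with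
      norm_smul_le := fun q x => (NormedAlgebra.restrictScalars ℚ ℝ _).norm_smul_le q x }
  have hcont : Continuous (blockDiagRingHom n) := by
    apply continuous_matrix
    intro i j
    cases i <;> cases j <;>
      simp only [blockDiagRingHom, RingHom.coe_mk, MonoidHom.coe_mk, OneHom.coe_mk,
        fromBlocks_apply₁₁, fromBlocks_apply₁₂, fromBlocks_apply₂₁, fromBlocks_apply₂₂] <;>
      fun_prop
  have h := @map_exp _ _ _ _ (by apply FiniteDimensional.complete ℝ) _ _ _ _ _
    (blockDiagRingHom n) hcont (X, Z)
  have hfst : exp ((X, Z) : Matrix (Fin n) (Fin n) ℝ × Matrix (Fin n) (Fin n) ℝ) =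
      (exp X, exp Z) := by
    ext1
    · exact @Prod.fst_exp _ _ _ _ (by apply FiniteDimensional.complete ℝ) _ _
        (by apply FiniteDimensional.complete ℝ) (X, Z)
    · exact @Prod.snd_exp _ _ _ _ (by apply FiniteDimensional.complete ℝ) _ _
        (by apply FiniteDimensional.complete ℝ) (X, Z)
  erw [hfst] at h
  simp [blockDiagRingHom] at h
  convert h.symm using 2
  · rfl
  · rfl

open NormedSpace in
lemma exp_fromBlocks_tri {n : ℕ} (X Z : Matrix (Fin n) (Fin n) ℝ) (c : ℝ) :
    exp (fromBlocks X (c • Z - c • X) 0 Z)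
      = fromBlocks (exp X) (c • exp Z - c • exp X) 0 (exp Z) := by
  set C : Matrix (Fin n) (Fin n) ℝ := c • (1 : Matrix (Fin n) (Fin n) ℝ) with hC
  have hmul : ∀ Y : Matrix (Fin n) (Fin n) ℝ, C * Y = c • Y := fun Y => by
    rw [hC, Matrix.smul_mul, Matrix.one_mul]
  have hmul' : ∀ Y : Matrix (Fin n) (Fin n) ℝ, Y * C = c • Y := fun Y => by
    rw [hC, Matrix.mul_smul, Matrix.mul_one]
  set P : Matrix (Fin n ⊕ Fin n) (Fin n ⊕ Fin n) ℝ := fromBlocks 1 C 0 1 with hP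
  set Q : Matrix (Fin n ⊕ Fin n) (Fin n ⊕ Fin n) ℝ := fromBlocks 1 (-C) 0 1 with hQ
  have hPQ : P * Q = 1 := by
    rw [hP, hQ, fromBlocks_multiply]
    simp [← fromBlocks_one]
  have hQP : Q * P = 1 := by
    rw [hP, hQ, fromBlocks_multiply]
    simp [← fromBlocks_one]
  have key : ∀ W V : Matrix (Fin n) (Fin n) ℝ,
      P * fromBlocks W 0 0 V * Q = fromBlocks W (c • V - c • W) 0 V := by
    intro W V
    rw [hP, hQ, fromBlocks_multiply, fromBlocks_multiply]
    simp only [Matrix.one_mul, Matrix.mul_one, Matrix.zero_mul, Matrix.mul_zero, add_zero,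
      zero_add, Matrix.mul_neg, hmul, hmul', smul_zero, neg_zero]
    rw [neg_add_eq_sub]
  have hconj : exp (P * fromBlocks X 0 0 Z * Q) = P * exp (fromBlocks X 0 0 Z) * Q :=
    Matrix.exp_units_conj ⟨P, Q, hPQ, hQP⟩ _
  rw [← key, hconj, exp_fromBlocks_diag, key]

/-- The derivative at `s₀` of `s ↦ exp (t • (A + s • B))` equals the upper-right `n×n`
block of `exp (t • [[A + s₀ • B, B],[0, A + s₀ • B]])`. -/
theorem hasDerivAt_exp_param_block {n : ℕ} (A B : Matrix (Fin n) (Fin n) ℝ) (t : ℝ)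
    (ht : 0 ≤ t) (s₀ : ℝ) :
    HasDerivAt (fun s : ℝ => mexp (t • (A + s • B)))
      ((mexp (t • Matrix.fromBlocks (A + s₀ • B) B 0 (A + s₀ • B))).toBlocks₁₂) s₀ := by
  set g : ℝ → Matrix (Fin n) (Fin n) ℝ := fun s =>
    (mexp (fromBlocks (t • (A + s • B)) (t • B) 0 (t • (A + s₀ • B)))).toBlocks₁₂ with hg
  have hkey : ∀ s : ℝ, s ≠ s₀ →
      slope (fun s : ℝ => mexp (t • (A + s • B))) s₀ s = g s := by
    intro s hs
    have hne : s₀ - s ≠ 0 := sub_ne_zero.2 (Ne.symm hs)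
    set c : ℝ := (s₀ - s)⁻¹ with hc
    have h12 : t • B = c • (t • (A + s₀ • B)) - c • (t • (A + s • B)) := by
      rw [← smul_sub]
      have h2 : t • (A + s₀ • B) - t • (A + s • B) = (t * (s₀ - s)) • B := by
        rw [← smul_sub, add_sub_add_left_eq_sub, ← sub_smul, smul_smul]
      rw [h2, smul_smul]
      congr 1
      rw [hc]
      field_simp
    have htri := exp_fromBlocks_tri (t • (A + s • B)) (t • (A + s₀ • B)) c
    have h3 : (s - s₀)⁻¹ = -c := by rw [hc, ← inv_neg, neg_sub]
    have htri' : mexp (fromBlocks (t • (A + s • B))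
          (c • t • (A + s₀ • B) - c • t • (A + s • B)) 0 (t • (A + s₀ • B)))
        = fromBlocks (mexp (t • (A + s • B)))
          (c • mexp (t • (A + s₀ • B)) - c • mexp (t • (A + s • B))) 0
          (mexp (t • (A + s₀ • B))) := htri
    show slope (fun s : ℝ => mexp (t • (A + s • B))) s₀ s =
      (mexp (fromBlocks (t • (A + s • B)) (t • B) 0 (t • (A + s₀ • B)))).toBlocks₁₂
    rw [slope_def_module, h12, htri', toBlocks_fromBlocks₁₂, h3, neg_smul, ← smul_neg,
      neg_sub, smul_sub]
  have hcontg : ContinuousAt g s₀ := by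
    letI : SeminormedRing (Matrix (Fin n ⊕ Fin n) (Fin n ⊕ Fin n) ℝ) :=
      Matrix.linftyOpSemiNormedRing
    letI : NormedRing (Matrix (Fin n ⊕ Fin n) (Fin n ⊕ Fin n) ℝ) := Matrix.linftyOpNormedRing
    letI : NormedAlgebra ℝ (Matrix (Fin n ⊕ Fin n) (Fin n ⊕ Fin n) ℝ) :=
      Matrix.linftyOpNormedAlgebra
    letI : NormedAlgebra ℚ (Matrix (Fin n ⊕ Fin n) (Fin n ⊕ Fin n) ℝ) :=
      { (inferInstance : Algebra ℚ (Matrix (Fin n ⊕ Fin n) (Fin n ⊕ Fin n) ℝ)) with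
        norm_smul_le := fun q x => (NormedAlgebra.restrictScalars ℚ ℝ _).norm_smul_le q x }
    have hF : Continuous fun s : ℝ =>
        fromBlocks (t • (A + s • B)) (t • B) 0 (t • (A + s₀ • B)) := by
      apply continuous_matrix
      intro i j
      cases i <;> cases j <;>
        simp only [fromBlocks_apply₁₁, fromBlocks_apply₁₂, fromBlocks_apply₂₁,
          fromBlocks_apply₂₂, Matrix.smul_apply, Matrix.add_apply, Matrix.zero_apply,
          smul_eq_mul] <;>
        fun_prop
    have hexp : Continuous fun s : ℝ =>
        NormedSpace.exp (fromBlocks (t • (A + s • B)) (t • B) 0 (t • (A + s₀ • B))) :=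
      (@NormedSpace.exp_continuous _ _ _ (by apply FiniteDimensional.complete ℝ)).comp hF
    have hcg : Continuous g := by
      apply continuous_matrix
      intro i j
      exact hexp.matrix_elem (Sum.inl i) (Sum.inr j)
    exact hcg.continuousAt
  have hval : g s₀ = (mexp (t • Matrix.fromBlocks (A + s₀ • B) B 0 (A + s₀ • B))).toBlocks₁₂ := by
    simp only [hg]
    congr 2
    rw [fromBlocks_smul, smul_zero]
  refine hasDerivAt_iff_tendsto_slope.2 ?_
  rw [← hval]
  refine (hcontg.tendsto.mono_left nhdsWithin_le_nhds).congr' ?_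
  filter_upwards [self_mem_nhdsWithin] with s hs
  exact (hkey s hs).symm
end

section
/- (Entrywise closed form underlying Proposition 2.2.) Let Q be an n×n real matrix, c ∈ ℝ, let i, j, a, b ∈ {1,…,n}, and let t ≥ 0. Let E_{ij} denote the n×n matrix with a 1 in entry (i,j) and zeros elsewhere. Then the entry in row a of the first block and column b of the second block of exp(t · [[Q, c·E_{ij}],[0, Q]]) equals c · ∫_0^t (exp((t−u)·Q))_{a i} · (exp(u·Q))_{j b} du. -/
set_option autoImplicit false
set_option maxHeartbeats 1000000

open Matrix

section Aux

open NormedSpace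

variable {n : ℕ}

local notation "E" => Matrix (Fin n) (Fin n) ℝ
local notation "E2" => Matrix (Fin n ⊕ Fin n) (Fin n ⊕ Fin n) ℝ

/-- Matrix-level block formula: the `(a, b)` entry of the upper-right block of
`exp (t • [[Q, N],[0, Q]])` equals `(∫_0^t exp ((t-u) • Q) * N * exp (u • Q) du) a b`. -/
theorem block_exp_aux (Q N : Matrix (Fin n) (Fin n) ℝ) (t : ℝ) (a b : Fin n) :
    NormedSpace.exp (t • Matrix.fromBlocks Q N 0 Q) (Sum.inl a) (Sum.inr b)
      = ∫ u in (0:ℝ)..t,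
          (NormedSpace.exp ((t - u) • Q) * N * NormedSpace.exp (u • Q)) a b := by
  letI : NormedRing E := Matrix.linftyOpNormedRing
  letI : NormedAlgebra ℝ E := Matrix.linftyOpNormedAlgebra
  letI : NormedRing E2 := Matrix.linftyOpNormedRing
  letI : NormedAlgebra ℝ E2 := Matrix.linftyOpNormedAlgebra
  set M : E2 := Matrix.fromBlocks Q N 0 Q with hM
  -- basic exp facts
  have hder' : ∀ s : ℝ, HasDerivAt (fun u : ℝ => exp (u • Q)) (Q * exp (s • Q)) s :=
    fun s => hasDerivAt_exp_smul_const' Q s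
  have contQ : Continuous fun u : ℝ => exp (u • Q) :=
    continuous_iff_continuousAt.2 fun s => (hder' s).continuousAt
  have hinvQ : ∀ s : ℝ, exp (s • Q) * exp ((-s) • Q) = 1 := by
    intro s
    rw [← Matrix.exp_add_of_commute _ _ (((Commute.refl Q).smul_left s).smul_right (-s))]
    simp [← add_smul, exp_zero]
  have hinvM : ∀ s : ℝ, exp (s • M) * exp ((-s) • M) = 1 := by
    intro s
    rw [← Matrix.exp_add_of_commute _ _ (((Commute.refl M).smul_left s).smul_right (-s))]
    simp [← add_smul, exp_zero]
  -- the integrand and its integral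
  set f : ℝ → E := fun u => exp ((-u) • Q) * N * exp (u • Q) with hf
  have contf : Continuous f := by
    exact ((contQ.comp continuous_neg).mul continuous_const).mul contQ
  set J : ℝ → E := fun s => ∫ u in (0:ℝ)..s, f u with hJ
  have hJder : ∀ s : ℝ, HasDerivAt J (f s) s := fun s =>
    (contf.integral_hasStrictDerivAt 0 s).hasDerivAt
  -- the candidate solution
  let L1 : E →L[ℝ] E2 := LinearMap.toContinuousLinearMap
    { toFun := fun A => Matrix.fromBlocks A 0 0 A
      map_add' := by intro A B; simp [Matrix.fromBlocks_add]
      map_smul' := by intro r A; simp [Matrix.fromBlocks_smul] }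
  let L2 : E →L[ℝ] E2 := LinearMap.toContinuousLinearMap
    { toFun := fun B => Matrix.fromBlocks 0 B 0 0
      map_add' := by intro A B; simp [Matrix.fromBlocks_add]
      map_smul' := by intro r A; simp [Matrix.fromBlocks_smul] }
  set C : ℝ → E2 := fun s =>
    L1 (exp (s • Q)) + L2 (exp (s • Q) * J s) with hC
  have hCblocks : ∀ s : ℝ,
      C s = Matrix.fromBlocks (exp (s • Q)) (exp (s • Q) * J s) 0 (exp (s • Q)) := by
    intro s
    simp only [hC, L1, L2, LinearMap.coe_toContinuousLinearMap', LinearMap.coe_mk,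
      AddHom.coe_mk, Matrix.fromBlocks_add, add_zero, zero_add]
  have hCder : ∀ s : ℝ, HasDerivAt C (M * C s) s := by
    intro s
    have h1 : HasDerivAt (fun s : ℝ => L1 (exp (s • Q))) (L1 (Q * exp (s • Q))) s :=
      L1.hasFDerivAt.comp_hasDerivAt s (hder' s)
    have h2 : HasDerivAt (fun s : ℝ => exp (s • Q) * J s)
        (Q * exp (s • Q) * J s + exp (s • Q) * f s) s := (hder' s).mul (hJder s)
    have h3 := L2.hasFDerivAt.comp_hasDerivAt s h2
    have key : L1 (Q * exp (s • Q))
        + L2 (Q * exp (s • Q) * J s + exp (s • Q) * f s) = M * C s := by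
      have hNs : exp (s • Q) * f s = N * exp (s • Q) := by
        simp only [hf]
        rw [← mul_assoc, ← mul_assoc, hinvQ s, one_mul]
      rw [hCblocks, hM, Matrix.fromBlocks_multiply]
      simp only [L1, L2, LinearMap.coe_toContinuousLinearMap', LinearMap.coe_mk,
        AddHom.coe_mk, Matrix.fromBlocks_add, hNs, mul_assoc]
      simp [Matrix.fromBlocks_add, mul_assoc]
    exact key ▸ (h1.add h3)
  -- the comparison function is constant
  have hexpMder : ∀ s : ℝ, HasDerivAt (fun s : ℝ => exp ((-s) • M))
      (-(M * exp ((-s) • M))) s := by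
    intro s
    have hg : HasDerivAt (fun u : ℝ => exp (u • M)) (M * exp ((-s) • M)) (-s) :=
      hasDerivAt_exp_smul_const' M (-s)
    have := hg.scomp s (hasDerivAt_neg s)
    simp only [Function.comp_def, neg_smul, one_smul] at this ⊢
    exact this
  set K : ℝ → E2 := fun s => exp ((-s) • M) * C s with hK
  have hKder : ∀ s : ℝ, HasDerivAt K 0 s := by
    intro s
    have h := (hexpMder s).mul (hCder s)
    have hcomm : Commute M (exp ((-s) • M)) :=
      (((Commute.refl M).smul_right (-s)).exp_right)
    have : -(M * exp ((-s) • M)) * C s + exp ((-s) • M) * (M * C s) = 0 := by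
      rw [← mul_assoc, ← hcomm.eq, neg_mul, mul_assoc, neg_add_cancel]
    exact this ▸ h
  have hKconst : ∀ s : ℝ, K s = K 0 := by
    intro s
    exact is_const_of_deriv_eq_zero (fun x => (hKder x).differentiableAt)
      (fun x => (hKder x).deriv) s 0
  have hK0 : K 0 = 1 := by
    simp only [hK, hCblocks]
    simp [hJ, intervalIntegral.integral_same, exp_zero, Matrix.fromBlocks_one]
  have hexpM : exp (t • M) = C t := by
    have h1 : exp (t • M) * K t = exp (t • M) := by rw [hKconst, hK0, mul_one]
    calc exp (t • M) = exp (t • M) * K t := h1.symm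
      _ = (exp (t • M) * exp ((-t) • M)) * C t := by rw [hK]; ring_nf; rw [mul_assoc]
      _ = C t := by rw [hinvM, one_mul]
  -- read off the entry
  rw [hexpM, hCblocks]
  have hblk : Matrix.fromBlocks (exp (t • Q)) (exp (t • Q) * J t) 0 (exp (t • Q))
      (Sum.inl a) (Sum.inr b) = (exp (t • Q) * J t) a b := rfl
  rw [hblk]
  let L3 : E →L[ℝ] ℝ := LinearMap.toContinuousLinearMap
    { toFun := fun X => (exp (t • Q) * X) a b
      map_add' := by intro X Y; simp [mul_add]
      map_smul' := by intro r X; simp [mul_smul_comm] }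
  have hL3 : ∀ X : E, L3 X = (exp (t • Q) * X) a b := fun X => rfl
  have hswap : (exp (t • Q) * J t) a b = ∫ u in (0:ℝ)..t, L3 (f u) := by
    rw [← hL3, hJ]
    exact (L3.intervalIntegral_comp_comm (contf.intervalIntegrable 0 t)).symm
  rw [hswap]
  apply intervalIntegral.integral_congr
  intro u _
  show L3 (f u) = (exp ((t - u) • Q) * N * exp (u • Q)) a b
  rw [hL3, hf]
  have hsplit : exp ((t - u) • Q) = exp (t • Q) * exp ((-u) • Q) := by
    rw [← Matrix.exp_add_of_commute _ _ (((Commute.refl Q).smul_left t).smul_right (-u)),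
      ← add_smul]
    ring_nf
  rw [hsplit]
  simp [mul_assoc]

end Aux

/-- Entrywise closed form: the `(a, b)` entry of the upper-right block of
`exp (t • [[Q, c • E_{ij}],[0, Q]])` equals
`c * ∫_0^t (exp ((t-u) • Q))_{a i} * (exp (u • Q))_{j b} du`. -/
theorem block_exp_entry_eq_integral {n : ℕ} (Q : Matrix (Fin n) (Fin n) ℝ) (c : ℝ)
    (i j a b : Fin n) (t : ℝ) (ht : 0 ≤ t) :
    mexp (t • Matrix.fromBlocks Q (c • Matrix.single i j (1:ℝ)) 0 Q)
        (Sum.inl a) (Sum.inr b)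
      = c * ∫ u in (0:ℝ)..t, mexp ((t - u) • Q) a i * mexp (u • Q) j b := by
  unfold mexp
  rw [block_exp_aux, ← intervalIntegral.integral_const_mul]
  apply intervalIntegral.integral_congr
  intro u _
  show (NormedSpace.exp ((t - u) • Q) * (c • Matrix.single i j (1:ℝ))
      * NormedSpace.exp (u • Q)) a b
    = c * (NormedSpace.exp ((t - u) • Q) a i * NormedSpace.exp (u • Q) j b)
  set A := NormedSpace.exp ((t - u) • Q)
  set B := NormedSpace.exp (u • Q)
  rw [Matrix.mul_smul, Matrix.smul_mul, Matrix.smul_apply, smul_eq_mul]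
  congr 1
  rw [mul_assoc, Matrix.mul_apply]
  rw [Finset.sum_eq_single i]
  · simp
  · intro k _ hk
    simp [hk]
  · intro h; exact absurd (Finset.mem_univ i) h
end

section
/- (Derivative of the closed-form expected number of jumps; first display in the proof of Theorem 2.7.) Let Q be an h×h generator matrix, fix times t_1 < t_2 < … < t_n, states y_1,…,y_n in {1,…,h} with (exp((t_{s+1}−t_s)·Q))_{y_s y_{s+1}} > 0 for all s, indices μ ≠ ν and α ≠ β, and set D = E_{αβ} − E_{αα}. For an h×h matrix M with off-diagonal entries m_{μν}, write C_γ^{(μν)}(M) = [[M, m_{μν}·E_{μν}],[0, M]], C_η^{(αβ)}(Q) = [[Q, D],[0, Q]], and C_ψ = [[C_γ^{(μν)}(Q), D_γ],[0, C_γ^{(μν)}(Q)]] where D_γ = [[D, δ_{μα}δ_{νβ}·E_{μν}],[0, D]]. Then the map s ↦ ∑_{s'=1}^{n−1} (exp(Δ_{s'}·(Q+s·D)))_{y_{s'} y_{s'+1}}^{−1} · (exp(Δ_{s'}·C_γ^{(μν)}(Q+s·D)))_{y_{s'}, h+y_{s'+1}}, with Δ_{s'} = t_{s'+1}−t_{s'},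 has derivative at s = 0 equal to ∑_{s'=1}^{n−1} [ −(exp(Δ_{s'}Q))_{y_{s'} y_{s'+1}}^{−2} · (exp(Δ_{s'}·C_η^{(αβ)}(Q)))_{y_{s'}, h+y_{s'+1}} · (exp(Δ_{s'}·C_γ^{(μν)}(Q)))_{y_{s'}, h+y_{s'+1}} + (exp(Δ_{s'}Q))_{y_{s'} y_{s'+1}}^{−1} · (exp(Δ_{s'}·C_ψ))_{y_{s'}, 3h+y_{s'+1}} ]. -/
set_option autoImplicit false

open Matrix

/-- `Q` is a generator matrix: off-diagonal entries nonnegative, diagonal entries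
nonpositive, rows summing to zero. -/
def IsGenerator {h : ℕ} (Q : Matrix (Fin h) (Fin h) ℝ) : Prop :=
  (∀ i j, i ≠ j → 0 ≤ Q i j) ∧ (∀ i, Q i i ≤ 0) ∧ (∀ i, ∑ j, Q i j = 0)

/-- The perturbation direction `D = E_{αβ} − E_{αα}`. -/
noncomputable def Dmat {h : ℕ} (α β : Fin h) : Matrix (Fin h) (Fin h) ℝ :=
  Matrix.single α β 1 - Matrix.single α α 1

/-- `C_γ^{(μν)}(M) = [[M, m_{μν} • E_{μν}],[0, M]]`. -/
noncomputable def Cγ {h : ℕ} (μ ν : Fin h) (M : Matrix (Fin h) (Fin h) ℝ) :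
    Matrix (Fin h ⊕ Fin h) (Fin h ⊕ Fin h) ℝ :=
  Matrix.fromBlocks M (M μ ν • Matrix.single μ ν 1) 0 M

/-- `C_φ^{(μ)}(M) = [[M, E_{μμ}],[0, M]]`. -/
noncomputable def Cφ {h : ℕ} (μ : Fin h) (M : Matrix (Fin h) (Fin h) ℝ) :
    Matrix (Fin h ⊕ Fin h) (Fin h ⊕ Fin h) ℝ :=
  Matrix.fromBlocks M (Matrix.single μ μ 1) 0 M

/-- `C_η^{(αβ)}(Q) = [[Q, E_{αβ} − E_{αα}],[0, Q]]`. -/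
noncomputable def Cη {h : ℕ} (α β : Fin h) (Q : Matrix (Fin h) (Fin h) ℝ) :
    Matrix (Fin h ⊕ Fin h) (Fin h ⊕ Fin h) ℝ :=
  Matrix.fromBlocks Q (Dmat α β) 0 Q

/-- `D_γ = [[D, δ_{μα} δ_{νβ} • E_{μν}],[0, D]]`, the derivative of `C_γ^{(μν)}` in
direction `D = E_{αβ} − E_{αα}`. -/
noncomputable def Dγ {h : ℕ} (μ ν α β : Fin h) : Matrix (Fin h ⊕ Fin h) (Fin h ⊕ Fin h) ℝ :=
  Matrix.fromBlocks (Dmat α β)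
    (((if μ = α then (1:ℝ) else 0) * (if ν = β then (1:ℝ) else 0)) •
      Matrix.single μ ν (1:ℝ))
    0 (Dmat α β)

/-- `C_ψ = [[C_γ^{(μν)}(Q), D_γ],[0, C_γ^{(μν)}(Q)]]`. -/
noncomputable def Cψ {h : ℕ} (μ ν α β : Fin h) (Q : Matrix (Fin h) (Fin h) ℝ) :
    Matrix ((Fin h ⊕ Fin h) ⊕ (Fin h ⊕ Fin h)) ((Fin h ⊕ Fin h) ⊕ (Fin h ⊕ Fin h)) ℝ :=
  Matrix.fromBlocks (Cγ μ ν Q) (Dγ μ ν α β) 0 (Cγ μ ν Q)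

/-- `D_φ = [[D, 0],[0, D]]`. -/
noncomputable def Dφ {h : ℕ} (α β : Fin h) : Matrix (Fin h ⊕ Fin h) (Fin h ⊕ Fin h) ℝ :=
  Matrix.fromBlocks (Dmat α β) 0 0 (Dmat α β)

/-- `C_ω = [[C_φ^{(μ)}(Q), D_φ],[0, C_φ^{(μ)}(Q)]]`. -/
noncomputable def Cω {h : ℕ} (μ α β : Fin h) (Q : Matrix (Fin h) (Fin h) ℝ) :
    Matrix ((Fin h ⊕ Fin h) ⊕ (Fin h ⊕ Fin h)) ((Fin h ⊕ Fin h) ⊕ (Fin h ⊕ Fin h)) ℝ :=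
  Matrix.fromBlocks (Cφ μ Q) (Dφ α β) 0 (Cφ μ Q)

/-!
Conjugating by `[[1, -c], [0, 1]]` shows that the upper-right block of
`exp [[X, c (X - Y)], [0, Y]]` is `c (exp X - exp Y)`. With `X = A + s B`, `Y = A` and `c = 1/s`,
the difference quotient of `s ↦ exp (A + s B)` at `0` is therefore the upper-right block of
`exp [[A + s B, B], [0, A]]`, which is continuous in `s`; so the derivative is the upper-right
block of `exp [[A, B], [0, A]]`. Since `μ ≠ ν`, `C_γ(Q + s D) = C_γ(Q) + s D_γ`, so both factors
of each summand are differentiated this way, and the quotient and product rules give the theorem.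
-/

open NormedSpace

namespace Matrix

variable {m n 𝕜 : Type*} [Fintype m] [DecidableEq m] [Fintype n] [DecidableEq n] [RCLike 𝕜]

def fromBlocksDiagonalRingHom (R : Type*) [Semiring R] :
    Matrix m m R × Matrix n n R →+* Matrix (m ⊕ n) (m ⊕ n) R where
  toFun X := fromBlocks X.1 0 0 X.2
  map_one' := fromBlocks_one
  map_mul' X Y := by simp [fromBlocks_multiply]
  map_zero' := fromBlocks_zero
  map_add' X Y := by simp [fromBlocks_add]

section LinftyOpNorm

open scoped Norms.Operator

-- Instance search does not find completeness for the operator-norm uniformity on these types,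
-- so it is supplied by `FiniteDimensional.complete`.
theorem exp_fromBlocks_zero_zero (X : Matrix m m 𝕜) (Y : Matrix n n 𝕜) :
    exp (fromBlocks X 0 0 Y) = fromBlocks (exp X) 0 0 (exp Y) := by
  have hcont : Continuous (fromBlocksDiagonalRingHom (m := m) (n := n) 𝕜) :=
    continuous_fst.matrix_fromBlocks continuous_const continuous_const continuous_snd
  have hXY : exp (X, Y) = (exp X, exp Y) := Prod.ext (Prod.fst_exp _) (Prod.snd_exp _)
  exact (@map_exp _ _ _ _ (FiniteDimensional.complete 𝕜 _) _ _ _ _ _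
    (fromBlocksDiagonalRingHom 𝕜) hcont (X, Y)).symm.trans (congrArg _ hXY)

theorem exp_fromBlocks_smul_sub (X Y : Matrix m m 𝕜) (c : 𝕜) :
    exp (fromBlocks X (c • (X - Y)) 0 Y) =
      fromBlocks (exp X) (c • (exp X - exp Y)) 0 (exp Y) := by
  let U : (Matrix (m ⊕ m) (m ⊕ m) 𝕜)ˣ :=
    ⟨fromBlocks 1 (-c • 1) 0 1, fromBlocks 1 (c • 1) 0 1,
      by simp [fromBlocks_multiply, fromBlocks_one], by simp [fromBlocks_multiply, fromBlocks_one]⟩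
  have hconj : fromBlocks X (c • (X - Y)) 0 Y = U * fromBlocks X 0 0 Y * (U⁻¹ :) := by
    simp [U, fromBlocks_multiply, sub_eq_add_neg]
  rw [hconj, exp_units_conj, exp_fromBlocks_zero_zero]
  simp [U, fromBlocks_multiply, sub_eq_add_neg]

theorem hasDerivAt_exp_add_smul_apply (A B : Matrix m m 𝕜) (i j : m) :
    HasDerivAt (fun s : 𝕜 => exp (A + s • B) i j)
      (exp (fromBlocks A B 0 A) (Sum.inl i) (Sum.inr j)) 0 := by
  have hslope : ∀ s ≠ 0, slope (fun s : 𝕜 => exp (A + s • B) i j) 0 s =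
      exp (fromBlocks (A + s • B) B 0 A) (Sum.inl i) (Sum.inr j) := by
    intro s hs
    have h := exp_fromBlocks_smul_sub (A + s • B) A s⁻¹
    rw [add_sub_cancel_left, inv_smul_smul₀ hs] at h
    simp [h, slope_def_field, div_eq_inv_mul]
  have hcont : Continuous fun s : 𝕜 =>
      exp (fromBlocks (A + s • B) B 0 A) (Sum.inl i) (Sum.inr j) := by
    have h : Continuous fun s : 𝕜 => exp (fromBlocks (A + s • B) B 0 A) :=
      (@exp_continuous _ _ _ (FiniteDimensional.complete 𝕜 _)).comp <|
        (continuous_const.add (continuous_id.smul continuous_const)).matrix_fromBlocks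
          continuous_const continuous_const continuous_const
    exact (continuous_apply_apply _ _).comp h
  rw [hasDerivAt_iff_tendsto_slope]
  refine ((hcont.tendsto' 0 _ (by simp)).mono_left nhdsWithin_le_nhds).congr' ?_
  filter_upwards [self_mem_nhdsWithin] with s hs
  exact (hslope s hs).symm

end LinftyOpNorm

end Matrix

theorem hasDerivAt_mexp_smul_add_smul_apply {ι : Type*} [Fintype ι] [DecidableEq ι] (Δ : ℝ)
    (A B : Matrix ι ι ℝ) (i j : ι) :
    HasDerivAt (fun s : ℝ => mexp (Δ • (A + s • B)) i j)
      (mexp (Δ • fromBlocks A B 0 A) (Sum.inl i) (Sum.inr j)) 0 := by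
  simp_rw [smul_add, smul_comm Δ, fromBlocks_smul, smul_zero]
  exact hasDerivAt_exp_add_smul_apply _ _ i j

lemma Dmat_apply_of_ne {h : ℕ} {μ ν : Fin h} (α β : Fin h) (hμν : μ ≠ ν) :
    Dmat α β μ ν = (if μ = α then (1:ℝ) else 0) * (if ν = β then (1:ℝ) else 0) := by
  have hdiag : ¬(α = μ ∧ α = ν) := fun h => hμν (h.1.symm.trans h.2)
  rw [Dmat, Matrix.sub_apply, single_apply, single_apply, if_neg hdiag, sub_zero,
    ite_zero_mul_ite_zero, one_mul]
  simp only [eq_comm]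

lemma Cγ_add_smul {h : ℕ} {μ ν : Fin h} (α β : Fin h) (hμν : μ ≠ ν)
    (Q : Matrix (Fin h) (Fin h) ℝ) (s : ℝ) :
    Cγ μ ν (Q + s • Dmat α β) = Cγ μ ν Q + s • Dγ μ ν α β := by
  rw [Cγ, Cγ, Dγ, fromBlocks_smul, smul_zero, fromBlocks_add, add_zero, Matrix.add_apply,
    Matrix.smul_apply, smul_eq_mul, Dmat_apply_of_ne α β hμν, add_smul, mul_smul]

theorem hasDerivAt_expected_jumps_general {h nn : ℕ} (Q : Matrix (Fin h) (Fin h) ℝ)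
    (t : Fin (nn + 1) → ℝ)
    (y : Fin (nn + 1) → Fin h)
    (hpos : ∀ s : Fin nn,
      0 < mexp ((t s.succ - t s.castSucc) • Q) (y s.castSucc) (y s.succ))
    (μ ν α β : Fin h) (hμν : μ ≠ ν) :
    HasDerivAt
      (fun s : ℝ => ∑ s' : Fin nn,
        (mexp ((t s'.succ - t s'.castSucc) • (Q + s • Dmat α β))
            (y s'.castSucc) (y s'.succ))⁻¹ *
          mexp ((t s'.succ - t s'.castSucc) • Cγ μ ν (Q + s • Dmat α β))
            (Sum.inl (y s'.castSucc)) (Sum.inr (y s'.succ)))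
      (∑ s' : Fin nn,
        (-(((mexp ((t s'.succ - t s'.castSucc) • Q) (y s'.castSucc) (y s'.succ)) ^ 2)⁻¹) *
            mexp ((t s'.succ - t s'.castSucc) • Cη α β Q)
              (Sum.inl (y s'.castSucc)) (Sum.inr (y s'.succ)) *
            mexp ((t s'.succ - t s'.castSucc) • Cγ μ ν Q)
              (Sum.inl (y s'.castSucc)) (Sum.inr (y s'.succ)) +
          (mexp ((t s'.succ - t s'.castSucc) • Q) (y s'.castSucc) (y s'.succ))⁻¹ *
            mexp ((t s'.succ - t s'.castSucc) • Cψ μ ν α β Q)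
              (Sum.inl (Sum.inl (y s'.castSucc))) (Sum.inr (Sum.inr (y s'.succ)))))
      0 := by
  refine HasDerivAt.fun_sum fun s' _ => ?_
  set Δ := t s'.succ - t s'.castSucc
  have hη := hasDerivAt_mexp_smul_add_smul_apply Δ Q (Dmat α β) (y s'.castSucc) (y s'.succ)
  have hψ := hasDerivAt_mexp_smul_add_smul_apply Δ (Cγ μ ν Q) (Dγ μ ν α β)
    (Sum.inl (y s'.castSucc)) (Sum.inr (y s'.succ))
  simp_rw [← Cγ_add_smul α β hμν] at hψ
  refine ((hη.inv (by simpa using (hpos s').ne')).fun_mul hψ).congr_deriv ?_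
  simp only [zero_smul, add_zero, Pi.inv_apply, Cη, Cψ]
  ring

/-- Derivative of the closed-form expected number of jumps in the direction
`D = E_{αβ} − E_{αα}`. -/
theorem hasDerivAt_expected_jumps {h nn : ℕ} (Q : Matrix (Fin h) (Fin h) ℝ)
    (hQ : IsGenerator Q) (t : Fin (nn + 1) → ℝ) (ht : StrictMono t)
    (y : Fin (nn + 1) → Fin h)
    (hpos : ∀ s : Fin nn,
      0 < mexp ((t s.succ - t s.castSucc) • Q) (y s.castSucc) (y s.succ))
    (μ ν α β : Fin h) (hμν : μ ≠ ν) (hαβ : α ≠ β) :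
    HasDerivAt
      (fun s : ℝ => ∑ s' : Fin nn,
        (mexp ((t s'.succ - t s'.castSucc) • (Q + s • Dmat α β))
            (y s'.castSucc) (y s'.succ))⁻¹ *
          mexp ((t s'.succ - t s'.castSucc) • Cγ μ ν (Q + s • Dmat α β))
            (Sum.inl (y s'.castSucc)) (Sum.inr (y s'.succ)))
      (∑ s' : Fin nn,
        (-(((mexp ((t s'.succ - t s'.castSucc) • Q) (y s'.castSucc) (y s'.succ)) ^ 2)⁻¹) *
            mexp ((t s'.succ - t s'.castSucc) • Cη α β Q)
              (Sum.inl (y s'.castSucc)) (Sum.inr (y s'.succ)) *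
            mexp ((t s'.succ - t s'.castSucc) • Cγ μ ν Q)
              (Sum.inl (y s'.castSucc)) (Sum.inr (y s'.succ)) +
          (mexp ((t s'.succ - t s'.castSucc) • Q) (y s'.castSucc) (y s'.succ))⁻¹ *
            mexp ((t s'.succ - t s'.castSucc) • Cψ μ ν α β Q)
              (Sum.inl (Sum.inl (y s'.castSucc))) (Sum.inr (Sum.inr (y s'.succ)))))
      0 :=
  hasDerivAt_expected_jumps_general Q t y hpos μ ν α β hμν
end

section
/- (Derivative of the closed-form expected holding time; second display in the proof of Theorem 2.7.) Let Q be an h×h generator matrix, fix times t_1 < … < t_n and states y_1,…,y_n in {1,…,h} with (exp((t_{s+1}−t_s)·Q))_{y_s y_{s+1}} > 0 for all s, an index μ, indices α ≠ β, and set D = E_{αβ} − E_{αα}. Write C_φ^{(μ)}(M) = [[M, E_{μμ}],[0, M]], C_η^{(αβ)}(Q) = [[Q, D],[0, Q]], and C_ω = [[C_φ^{(μ)}(Q), D_φ],[0, C_φ^{(μ)}(Q)]] where D_φ = [[D, 0],[0, D]]. Then the map s ↦ ∑_{s'=1}^{n−1} (exp(Δ_{s'}·(Q+s·D)))_{y_{s'}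 y_{s'+1}}^{−1} · (exp(Δ_{s'}·C_φ^{(μ)}(Q+s·D)))_{y_{s'}, h+y_{s'+1}}, with Δ_{s'} = t_{s'+1}−t_{s'}, has derivative at s = 0 equal to ∑_{s'=1}^{n−1} [ −(exp(Δ_{s'}Q))_{y_{s'} y_{s'+1}}^{−2} · (exp(Δ_{s'}·C_η^{(αβ)}(Q)))_{y_{s'}, h+y_{s'+1}} · (exp(Δ_{s'}·C_φ^{(μ)}(Q)))_{y_{s'}, h+y_{s'+1}} + (exp(Δ_{s'}Q))_{y_{s'} y_{s'+1}}^{−1} · (exp(Δ_{s'}·C_ω))_{y_{s'}, 3h+y_{s'+1}} ]. -/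
set_option autoImplicit false

open Matrix

section Aux

variable {n : Type*} [Fintype n] [DecidableEq n]

/-- The "sum of products" appearing in the derivative of the matrix power. -/
noncomputable def Sder (A B : Matrix n n ℝ) (k : ℕ) : Matrix n n ℝ :=
  ∑ i ∈ Finset.range k, A ^ i * B * A ^ (k - 1 - i)

lemma Sder_succ (A B : Matrix n n ℝ) (k : ℕ) :
    Sder A B (k + 1) = Sder A B k * A + A ^ k * B := by
  unfold Sder
  rw [Finset.sum_range_succ, Finset.sum_mul]
  congr 1
  · refine Finset.sum_congr rfl fun i hi => ?_
    have hik := Finset.mem_range.mp hi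
    have h1 : k + 1 - 1 - i = (k - 1 - i) + 1 := by omega
    rw [h1, pow_succ, ← mul_assoc]
  · simp

lemma blockPow (A B : Matrix n n ℝ) (k : ℕ) :
    (fromBlocks A B 0 A) ^ k = fromBlocks (A ^ k) (Sder A B k) 0 (A ^ k) := by
  induction k with
  | zero => simp [Sder, ← Matrix.fromBlocks_one]
  | succ k ih =>
    rw [pow_succ, ih, Matrix.fromBlocks_multiply, Sder_succ, pow_succ]
    congr 1 <;> simp [add_comm]

lemma entry_pow_bound (M : Matrix n n ℝ) (c : ℝ) (hc : 0 ≤ c)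
    (hM : ∀ a b, |M a b| ≤ c) (k : ℕ) :
    ∀ a b : n, |(M ^ k) a b| ≤ ((Fintype.card n : ℝ) * c) ^ k := by
  induction k with
  | zero =>
    intro a b
    simp only [pow_zero]
    rw [Matrix.one_apply]
    split <;> simp
  | succ k ih =>
    intro a b
    rw [pow_succ, Matrix.mul_apply]
    calc |∑ u, (M ^ k) a u * M u b| ≤ ∑ u, |(M ^ k) a u * M u b| :=
          Finset.abs_sum_le_sum_abs _ _
      _ ≤ ∑ _u : n, ((Fintype.card n : ℝ) * c) ^ k * c := by
          refine Finset.sum_le_sum fun u _ => ?_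
          rw [abs_mul]
          exact mul_le_mul (ih a u) (hM u b) (abs_nonneg _)
            (pow_nonneg (mul_nonneg (Nat.cast_nonneg _) hc) _)
      _ = ((Fintype.card n : ℝ) * c) ^ (k + 1) := by
          rw [Finset.sum_const, Finset.card_univ, nsmul_eq_mul, pow_succ]
          ring

lemma entry_mul3_bound (M B : Matrix n n ℝ) (c cB : ℝ) (hc : 0 ≤ c) (hcB : 0 ≤ cB)
    (hM : ∀ a b, |M a b| ≤ c) (hB : ∀ a b, |B a b| ≤ cB) (i j : ℕ) (a b : n) :
    |(M ^ i * B * M ^ j) a b| ≤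
      (Fintype.card n : ℝ) ^ 2 * cB * ((Fintype.card n : ℝ) * c) ^ (i + j) := by
  have hKc : (0:ℝ) ≤ (Fintype.card n : ℝ) * c := mul_nonneg (Nat.cast_nonneg _) hc
  have hMi := entry_pow_bound M c hc hM i
  have hMj := entry_pow_bound M c hc hM j
  rw [Matrix.mul_apply]
  calc |∑ u, (M ^ i * B) a u * (M ^ j) u b| ≤ ∑ u, |(M ^ i * B) a u * (M ^ j) u b| :=
        Finset.abs_sum_le_sum_abs _ _
    _ ≤ ∑ _u : n, ((Fintype.card n : ℝ) * (((Fintype.card n : ℝ) * c) ^ i * cB)) *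
          ((Fintype.card n : ℝ) * c) ^ j := by
        refine Finset.sum_le_sum fun u _ => ?_
        rw [abs_mul]
        refine mul_le_mul ?_ (hMj u b) (abs_nonneg _) ?_
        · rw [Matrix.mul_apply]
          calc |∑ v, (M ^ i) a v * B v u| ≤ ∑ v, |(M ^ i) a v * B v u| :=
                Finset.abs_sum_le_sum_abs _ _
            _ ≤ ∑ _v : n, ((Fintype.card n : ℝ) * c) ^ i * cB := by
                refine Finset.sum_le_sum fun v _ => ?_
                rw [abs_mul]
                exact mul_le_mul (hMi a v) (hB v u) (abs_nonneg _) (pow_nonneg hKc _)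
            _ = (Fintype.card n : ℝ) * (((Fintype.card n : ℝ) * c) ^ i * cB) := by
                rw [Finset.sum_const, Finset.card_univ, nsmul_eq_mul]
        · positivity
    _ = (Fintype.card n : ℝ) ^ 2 * cB * ((Fintype.card n : ℝ) * c) ^ (i + j) := by
        rw [Finset.sum_const, Finset.card_univ, nsmul_eq_mul, pow_add]
        ring

/-- Sum of absolute values of all entries. -/
noncomputable def cval (M : Matrix n n ℝ) : ℝ := ∑ i, ∑ j, |M i j|

lemma cval_nonneg (M : Matrix n n ℝ) : 0 ≤ cval M :=
  Finset.sum_nonneg fun _ _ => Finset.sum_nonneg fun _ _ => abs_nonneg _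

lemma abs_le_cval (M : Matrix n n ℝ) (a b : n) : |M a b| ≤ cval M := by
  calc |M a b| ≤ ∑ j, |M a j| :=
        Finset.single_le_sum (f := fun j => |M a j|) (fun j _ => abs_nonneg _) (Finset.mem_univ b)
    _ ≤ cval M :=
        Finset.single_le_sum (f := fun i => ∑ j, |M i j|)
          (fun i _ => Finset.sum_nonneg fun _ _ => abs_nonneg _) (Finset.mem_univ a)

lemma summable_exp_entry (M : Matrix n n ℝ) (a b : n) :
    Summable (fun k : ℕ => (k.factorial : ℝ)⁻¹ * (M ^ k) a b) := by
  refine Summable.of_norm_bounded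
    (Real.summable_pow_div_factorial ((Fintype.card n : ℝ) * cval M)) fun k => ?_
  have h := entry_pow_bound M (cval M) (cval_nonneg M) (abs_le_cval M) k a b
  rw [Real.norm_eq_abs, abs_mul, abs_inv, Nat.abs_cast, div_eq_inv_mul]
  exact mul_le_mul_of_nonneg_left h (by positivity)

lemma mexp_apply (M : Matrix n n ℝ) (a b : n) :
    mexp M a b = ∑' k : ℕ, (k.factorial : ℝ)⁻¹ * (M ^ k) a b := by
  have hsum2 : ∀ a b : n, Summable (fun k : ℕ => ((k.factorial : ℝ)⁻¹ • M ^ k) a b) := by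
    intro a b
    simpa [Matrix.smul_apply, smul_eq_mul] using summable_exp_entry M a b
  have hsum1 : ∀ a : n, Summable (fun k : ℕ => ((k.factorial : ℝ)⁻¹ • M ^ k) a) := by
    intro a
    exact Pi.summable.mpr fun b => hsum2 a b
  have hsum : Summable (fun k : ℕ => (k.factorial : ℝ)⁻¹ • M ^ k) :=
    Pi.summable.mpr hsum1
  have h1 : mexp M = ∑' k : ℕ, (k.factorial : ℝ)⁻¹ • M ^ k := by
    rw [mexp, NormedSpace.exp_eq_tsum ℝ]
  rw [h1]
  have h2 : (∑' k : ℕ, (k.factorial : ℝ)⁻¹ • M ^ k) a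
      = ∑' k : ℕ, ((k.factorial : ℝ)⁻¹ • M ^ k) a := tsum_apply hsum
  rw [h2, tsum_apply (hsum1 a)]
  exact tsum_congr fun k => by simp [Matrix.smul_apply, smul_eq_mul]

lemma hasDerivAt_pow_entry (A B : Matrix n n ℝ) (k : ℕ) (s0 : ℝ) :
    ∀ a b : n, HasDerivAt (fun s : ℝ => ((A + s • B) ^ k) a b)
      ((Sder (A + s0 • B) B k) a b) s0 := by
  induction k with
  | zero =>
    intro a b
    simp only [pow_zero, Sder, Finset.range_zero, Finset.sum_empty, Matrix.zero_apply]
    exact hasDerivAt_const s0 ((1 : Matrix n n ℝ) a b)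
  | succ k ih =>
    intro a b
    have h1 : ∀ s : ℝ, ((A + s • B) ^ (k + 1)) a b
        = ∑ u, ((A + s • B) ^ k) a u * (A u b + s * B u b) := by
      intro s
      rw [pow_succ, Matrix.mul_apply]
      exact Finset.sum_congr rfl fun u _ => by
        simp [Matrix.add_apply, Matrix.smul_apply, smul_eq_mul]
    simp only [h1]
    have key : HasDerivAt
        (fun s : ℝ => ∑ u, ((A + s • B) ^ k) a u * (A u b + s * B u b))
        (∑ u, ((Sder (A + s0 • B) B k) a u * (A u b + s0 * B u b)
          + ((A + s0 • B) ^ k) a u * B u b)) s0 := by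
      refine HasDerivAt.fun_sum fun u _ => ?_
      have h2 : HasDerivAt (fun s : ℝ => A u b + s * B u b) (B u b) s0 :=
        (hasDerivAt_mul_const (B u b)).const_add (A u b)
      simpa using (ih a u).fun_mul h2
    convert key using 1
    rw [Sder_succ, Matrix.add_apply, Matrix.mul_apply, Matrix.mul_apply,
      ← Finset.sum_add_distrib]
    refine Finset.sum_congr rfl fun u _ => ?_
    simp [Matrix.add_apply, Matrix.smul_apply, smul_eq_mul]

lemma core (A B : Matrix n n ℝ) (a b : n) :
    HasDerivAt (fun s : ℝ => mexp (A + s • B) a b)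
      (mexp (fromBlocks A B 0 A) (Sum.inl a) (Sum.inr b)) 0 := by
  classical
  set K : ℝ := (Fintype.card n : ℝ) with hK
  have hK0 : 0 ≤ K := Nat.cast_nonneg _
  set c : ℝ := cval A + cval B with hc
  have hc0 : 0 ≤ c := add_nonneg (cval_nonneg A) (cval_nonneg B)
  set r : ℝ := max (K * c) 1 with hr
  have hr1 : (1:ℝ) ≤ r := le_max_right _ _
  have hr0 : (0:ℝ) ≤ r := le_trans zero_le_one hr1
  set u : ℕ → ℝ := fun k => K ^ 2 * cval B * ((2 * r) ^ k / (k.factorial : ℝ)) with hu_def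
  have hu : Summable u := (Real.summable_pow_div_factorial (2 * r)).mul_left _
  -- entry bound for A + s • B when |s| < 1
  have hMent : ∀ s : ℝ, s ∈ Metric.ball (0:ℝ) 1 → ∀ a b : n, |(A + s • B) a b| ≤ c := by
    intro s hs a b
    have hs1 : |s| ≤ 1 := le_of_lt (by simpa [Real.dist_eq] using hs)
    calc |(A + s • B) a b| = |A a b + s * B a b| := by
          simp [Matrix.add_apply, Matrix.smul_apply, smul_eq_mul]
      _ ≤ |A a b| + |s| * |B a b| := by
          rw [← abs_mul]; exact abs_add_le _ _
      _ ≤ cval A + 1 * cval B := by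
          gcongr
          · exact abs_le_cval A a b
          · exact abs_le_cval B a b
      _ = c := by rw [one_mul]
  -- the series and its derivative
  set g : ℕ → ℝ → ℝ := fun k s => (k.factorial : ℝ)⁻¹ * ((A + s • B) ^ k) a b with hg_def
  set g' : ℕ → ℝ → ℝ := fun k s => (k.factorial : ℝ)⁻¹ * (Sder (A + s • B) B k) a b with hg'_def
  have hg : ∀ k s, s ∈ Metric.ball (0:ℝ) 1 → HasDerivAt (g k) (g' k s) s := by
    intro k s _
    exact (hasDerivAt_pow_entry A B k s a b).const_mul _
  have hg' : ∀ k s, s ∈ Metric.ball (0:ℝ) 1 → ‖g' k s‖ ≤ u k := by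
    intro k s hs
    have hSb : |(Sder (A + s • B) B k) a b| ≤ k * (K ^ 2 * cval B * r ^ k) := by
      unfold Sder
      calc |(∑ i ∈ Finset.range k, (A + s • B) ^ i * B * (A + s • B) ^ (k - 1 - i)) a b|
          = |∑ i ∈ Finset.range k, ((A + s • B) ^ i * B * (A + s • B) ^ (k - 1 - i)) a b| := by
            rw [Matrix.sum_apply]
        _ ≤ ∑ i ∈ Finset.range k, |((A + s • B) ^ i * B * (A + s • B) ^ (k - 1 - i)) a b| :=
            Finset.abs_sum_le_sum_abs _ _
        _ ≤ ∑ _i ∈ Finset.range k, K ^ 2 * cval B * r ^ k := by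
            refine Finset.sum_le_sum fun i hi => ?_
            have hik := Finset.mem_range.mp hi
            refine le_trans (entry_mul3_bound (A + s • B) B c (cval B) hc0 (cval_nonneg B)
              (hMent s hs) (abs_le_cval B) i (k - 1 - i) a b) ?_
            have hij : i + (k - 1 - i) = k - 1 := by omega
            rw [hij]
            have h1 : (K * c) ^ (k - 1) ≤ r ^ (k - 1) :=
              pow_le_pow_left₀ (mul_nonneg hK0 hc0) (le_max_left _ _) _
            have h2 : r ^ (k - 1) ≤ r ^ k := pow_le_pow_right₀ hr1 (Nat.sub_le _ _)
            have : (K * c) ^ (k - 1) ≤ r ^ k := le_trans h1 h2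
            have hKB : (0:ℝ) ≤ K ^ 2 * cval B := mul_nonneg (by positivity) (cval_nonneg B)
            calc K ^ 2 * cval B * (K * c) ^ (k - 1) ≤ K ^ 2 * cval B * r ^ k :=
              mul_le_mul_of_nonneg_left this hKB
              _ = K ^ 2 * cval B * r ^ k := rfl
        _ = k * (K ^ 2 * cval B * r ^ k) := by
            rw [Finset.sum_const, Finset.card_range, nsmul_eq_mul]
    rw [hg'_def]
    simp only
    rw [Real.norm_eq_abs, abs_mul, abs_inv, Nat.abs_cast]
    have hkfac : (0:ℝ) < (k.factorial : ℝ) := by exact_mod_cast k.factorial_pos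
    have h3 : (k : ℝ) * r ^ k ≤ (2 * r) ^ k := by
      rw [mul_pow]
      have hk2 : (k : ℝ) ≤ 2 ^ k := by
        exact_mod_cast (Nat.lt_two_pow_self (n := k)).le
      exact mul_le_mul_of_nonneg_right hk2 (pow_nonneg hr0 _)
    calc (k.factorial : ℝ)⁻¹ * |(Sder (A + s • B) B k) a b|
        ≤ (k.factorial : ℝ)⁻¹ * (k * (K ^ 2 * cval B * r ^ k)) :=
          mul_le_mul_of_nonneg_left hSb (by positivity)
      _ = K ^ 2 * cval B * ((k * r ^ k) / (k.factorial : ℝ)) := by ring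
      _ ≤ K ^ 2 * cval B * ((2 * r) ^ k / (k.factorial : ℝ)) := by
          have hKB : (0:ℝ) ≤ K ^ 2 * cval B := mul_nonneg (by positivity) (cval_nonneg B)
          gcongr
      _ = u k := rfl
  have hg0 : Summable (fun k => g k 0) := by
    simpa [hg_def] using summable_exp_entry (A + (0:ℝ) • B) a b
  have key := hasDerivAt_tsum_of_isPreconnected hu Metric.isOpen_ball
    (convex_ball (0:ℝ) 1).isPreconnected hg hg'
    (Metric.mem_ball_self one_pos) hg0 (Metric.mem_ball_self one_pos)
  have hfun : (fun s : ℝ => mexp (A + s • B) a b) = fun z => ∑' k, g k z :=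
    funext fun s => mexp_apply _ a b
  have hval : (∑' k, g' k 0) = mexp (fromBlocks A B 0 A) (Sum.inl a) (Sum.inr b) := by
    rw [mexp_apply]
    refine tsum_congr fun k => ?_
    rw [blockPow]
    simp [hg'_def, Matrix.fromBlocks_apply₁₂]
  rw [hfun, ← hval]
  exact key

end Aux

/-- Derivative of the closed-form expected holding time in the direction
`D = E_{αβ} − E_{αα}`. -/
theorem hasDerivAt_expected_holding {h nn : ℕ} (Q : Matrix (Fin h) (Fin h) ℝ)
    (hQ : IsGenerator Q) (t : Fin (nn + 1) → ℝ) (ht : StrictMono t)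
    (y : Fin (nn + 1) → Fin h)
    (hpos : ∀ s : Fin nn,
      0 < mexp ((t s.succ - t s.castSucc) • Q) (y s.castSucc) (y s.succ))
    (μ α β : Fin h) (hαβ : α ≠ β) :
    HasDerivAt
      (fun s : ℝ => ∑ s' : Fin nn,
        (mexp ((t s'.succ - t s'.castSucc) • (Q + s • Dmat α β))
            (y s'.castSucc) (y s'.succ))⁻¹ *
          mexp ((t s'.succ - t s'.castSucc) • Cφ μ (Q + s • Dmat α β))
            (Sum.inl (y s'.castSucc)) (Sum.inr (y s'.succ)))
      (∑ s' : Fin nn,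
        (-(((mexp ((t s'.succ - t s'.castSucc) • Q) (y s'.castSucc) (y s'.succ)) ^ 2)⁻¹) *
            mexp ((t s'.succ - t s'.castSucc) • Cη α β Q)
              (Sum.inl (y s'.castSucc)) (Sum.inr (y s'.succ)) *
            mexp ((t s'.succ - t s'.castSucc) • Cφ μ Q)
              (Sum.inl (y s'.castSucc)) (Sum.inr (y s'.succ)) +
          (mexp ((t s'.succ - t s'.castSucc) • Q) (y s'.castSucc) (y s'.succ))⁻¹ *
            mexp ((t s'.succ - t s'.castSucc) • Cω μ α β Q)
              (Sum.inl (Sum.inl (y s'.castSucc))) (Sum.inr (Sum.inr (y s'.succ)))))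
      0 := by
  apply HasDerivAt.fun_sum
  intro s' _
  set Δ : ℝ := t s'.succ - t s'.castSucc with hΔ
  set a := y s'.castSucc with ha
  set b := y s'.succ with hb
  have hQrw : ∀ s : ℝ, Δ • (Q + s • Dmat α β) = Δ • Q + s • (Δ • Dmat α β) := fun s => by
    rw [smul_add, smul_comm]
  have hφblock : ∀ s : ℝ, Cφ μ (Q + s • Dmat α β) = Cφ μ Q + s • Dφ α β := by
    intro s
    unfold Cφ Dφ
    rw [Matrix.fromBlocks_smul, Matrix.fromBlocks_add]
    congr 1 <;> simp
  have hφrw : ∀ s : ℝ, Δ • Cφ μ (Q + s • Dmat α β) = Δ • Cφ μ Q + s • (Δ • Dφ α β) := by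
    intro s
    rw [hφblock, smul_add, smul_comm]
  have hηeq : fromBlocks (Δ • Q) (Δ • Dmat α β) 0 (Δ • Q) = Δ • Cη α β Q := by
    unfold Cη; rw [Matrix.fromBlocks_smul, smul_zero]
  have hωeq : fromBlocks (Δ • Cφ μ Q) (Δ • Dφ α β) 0 (Δ • Cφ μ Q) = Δ • Cω μ α β Q := by
    unfold Cω; rw [Matrix.fromBlocks_smul, smul_zero]
  have hg : HasDerivAt (fun s : ℝ => mexp (Δ • (Q + s • Dmat α β)) a b)
      (mexp (Δ • Cη α β Q) (Sum.inl a) (Sum.inr b)) 0 := by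
    have h := core (Δ • Q) (Δ • Dmat α β) a b
    rw [hηeq] at h
    simpa only [← hQrw] using h
  have hφd : HasDerivAt
      (fun s : ℝ => mexp (Δ • Cφ μ (Q + s • Dmat α β)) (Sum.inl a) (Sum.inr b))
      (mexp (Δ • Cω μ α β Q) (Sum.inl (Sum.inl a)) (Sum.inr (Sum.inr b))) 0 := by
    have h := core (Δ • Cφ μ Q) (Δ • Dφ α β) (Sum.inl a) (Sum.inr b)
    rw [hωeq] at h
    simpa only [← hφrw] using h
  have h0 : mexp (Δ • (Q + (0:ℝ) • Dmat α β)) a b ≠ 0 := by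
    simp only [zero_smul, add_zero]
    exact ne_of_gt (hpos s')
  have comb := (hg.inv h0).fun_mul hφd
  convert comb using 1
  · rfl
  · rfl
  simp only [Pi.inv_apply, zero_smul, add_zero]
  ring
end

section
/- (Theorem 2.7, mixed second derivative of the EM objective.) Let Q be an h×h generator matrix, Q' an h×h matrix with all off-diagonal entries q'_{ij} > 0, fix times t_1 < … < t_n and states y_1,…,y_n in {1,…,h} with (exp((t_{s+1}−t_s)·Q))_{y_s y_{s+1}} > 0 for all s, allowed pairs α ≠ β and μ ≠ ν (off-diagonal indices with q_{αβ} > 0 and q_{μν} > 0), and set D = E_{αβ} − E_{αα}, Δ_s = t_{s+1}−t_s. With C_γ^{(μν)}(M) = [[M, m_{μν}·E_{μν}],[0, M]], C_φ^{(μ)}(M) = [[M, E_{μμ}],[0, M]], C_η^{(αβ)} = [[Q, D],[0, Q]], C_ψ = [[C_γ^{(μν)}(Q), [[D, δ_{μα}δ_{νβ}·E_{μν}],[0, D]]],[0, C_γ^{(μν)}(Q)]] and C_ω = [[C_φ^{(μ)}(Q), [[D, 0],[0, D]]],[0, C_φ^{(μ)}(Q)]]: the map s ↦ (1/q'_{μν})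 · ∑_{s'} (exp(Δ_{s'}(Q+sD)))_{y_{s'} y_{s'+1}}^{−1} (exp(Δ_{s'} C_γ^{(μν)}(Q+sD)))_{y_{s'}, h+y_{s'+1}} − ∑_{s'} (exp(Δ_{s'}(Q+sD)))_{y_{s'} y_{s'+1}}^{−1} (exp(Δ_{s'} C_φ^{(μ)}(Q+sD)))_{y_{s'}, h+y_{s'+1}} (i.e. the partial derivative ∂R(Q';Q)/∂q'_{μν} as a function of the perturbed Q) has derivative at s = 0 equal to ∑_{s'=1}^{n−1} { (1/q'_{μν})·[ −(exp(Δ_{s'}Q))_{y_{s'} y_{s'+1}}^{−2} (exp(Δ_{s'} C_η^{(αβ)}))_{y_{s'}, h+y_{s'+1}} (exp(Δ_{s'} C_γ^{(μν)}(Q)))_{y_{s'}, h+y_{s'+1}} + (exp(Δ_{s'}Q))_{y_{s'} y_{s'+1}}^{−1} (exp(Δ_{s'} C_ψ))_{y_{s'}, 3h+y_{s'+1}} ] − [ −(exp(Δ_{s'}Q))_{y_{s'} y_{s'+1}}^{−2} (exp(Δ_{s'} C_η^{(αβ)}))_{y_{s'}, h+y_{s'+1}} (exp(Δ_{s'} C_φ^{(μ)}(Q)))_{y_{s'},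 h+y_{s'+1}} + (exp(Δ_{s'}Q))_{y_{s'} y_{s'+1}}^{−1} (exp(Δ_{s'} C_ω))_{y_{s'}, 3h+y_{s'+1}} ] }. -/
set_option autoImplicit false

open Matrix

open Finset in
private theorem EM_hasDerivAt_affine_pow {𝔸 : Type*} [NormedRing 𝔸] [NormedAlgebra ℝ 𝔸]
    (A B : 𝔸) (k : ℕ) (s : ℝ) :
    HasDerivAt (fun s : ℝ => (A + s • B) ^ k)
      (∑ i ∈ Finset.range k, (A + s • B) ^ i * B * (A + s • B) ^ (k - 1 - i)) s := by
  induction k with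
  | zero => simpa using hasDerivAt_const s (1 : 𝔸)
  | succ k ih =>
      have hbase : HasDerivAt (fun s : ℝ => A + s • B) B s := by
        simpa using ((hasDerivAt_id s).smul_const B).const_add A
      have h : HasDerivAt (fun s : ℝ => (A + s • B) * (A + s • B) ^ k) _ s := hbase.mul ih
      have heq : (fun s : ℝ => (A + s • B) * (A + s • B) ^ k)
          = fun s : ℝ => (A + s • B) ^ (k + 1) := by
        funext u; rw [← pow_succ']
      rw [heq] at h
      convert h using 1
      rw [Finset.sum_range_succ']
      have h1 : ∀ i ∈ range k, (A + s • B) ^ (i+1) * B * (A + s • B) ^ (k + 1 - 1 - (i+1))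
          = (A + s • B) * ((A + s • B)^i * B * (A + s • B)^(k-1-i)) := by
        intro i hi
        have h2 : k - (i+1) = k - 1 - i := by omega
        simp [pow_succ', h2, mul_assoc]
      rw [Finset.sum_congr rfl h1, ← Finset.mul_sum]
      simp [add_comm]

open scoped Nat in
private theorem EM_summable_nat_mul_pow_div_factorial (x : ℝ) :
    Summable (fun n : ℕ => (n : ℝ) * x ^ n / (n ! : ℝ)) := by
  rw [← summable_nat_add_iff 1]
  have h : ∀ n : ℕ, ((n + 1 : ℕ) : ℝ) * x ^ (n + 1) / ((n + 1)! : ℝ) = x * (x ^ n / (n ! : ℝ)) := by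
    intro n
    rw [Nat.factorial_succ]
    push_cast
    have hn : (n ! : ℝ) ≠ 0 := by positivity
    field_simp
    ring
  simp only [h]
  exact (Real.summable_pow_div_factorial x).mul_left x

open Finset in
private theorem EM_fromBlocks_pow {m : Type*} [Fintype m] [DecidableEq m]
    (A B : Matrix m m ℝ) (k : ℕ) :
    (fromBlocks A B 0 A) ^ k =
      fromBlocks (A ^ k) (∑ i ∈ Finset.range k, A ^ i * B * A ^ (k - 1 - i)) 0 (A ^ k) := by
  induction k with
  | zero => simp [Matrix.fromBlocks_one]
  | succ k ih =>
      rw [pow_succ', ih, Matrix.fromBlocks_multiply]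
      have hsum : A * ∑ i ∈ range k, A ^ i * B * A ^ (k - 1 - i) + B * A ^ k
          = ∑ i ∈ range (k + 1), A ^ i * B * A ^ (k - i) := by
        rw [Finset.sum_range_succ']
        have h1 : ∀ i ∈ range k, A ^ (i+1) * B * A ^ (k - (i+1)) = A * (A^i * B * A^(k-1-i)) := by
          intro i hi
          have h2 : k - (i+1) = k-1-i := by omega
          simp [pow_succ', h2, mul_assoc]
        rw [Finset.sum_congr rfl h1, ← Finset.mul_sum]
        simp
      have h3 : ∀ i ∈ range (k+1), A ^ i * B * A ^ (k - i) = A ^ i * B * A ^ (k + 1 - 1 - i) := by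
        intro i hi
        have h4 : k - i = k + 1 - 1 - i := by omega
        rw [h4]
      rw [hsum, Finset.sum_congr rfl h3]
      simp [pow_succ']

private theorem EM_norm_pow_mul_le {𝔸 : Type*} [SeminormedRing 𝔸] (x C : 𝔸) (k : ℕ) :
    ‖x ^ k * C‖ ≤ ‖x‖ ^ k * ‖C‖ := by
  induction k with
  | zero => simp
  | succ k ih =>
      calc ‖x ^ (k+1) * C‖ = ‖x * (x ^ k * C)‖ := by rw [pow_succ', mul_assoc]
        _ ≤ ‖x‖ * ‖x ^ k * C‖ := norm_mul_le _ _
        _ ≤ ‖x‖ * (‖x‖ ^ k * ‖C‖) := by gcongr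
        _ = ‖x‖ ^ (k+1) * ‖C‖ := by rw [pow_succ']; ring

private theorem EM_norm_mul_pow_le {𝔸 : Type*} [SeminormedRing 𝔸] (x C : 𝔸) (k : ℕ) :
    ‖C * x ^ k‖ ≤ ‖C‖ * ‖x‖ ^ k := by
  induction k with
  | zero => simp
  | succ k ih =>
      calc ‖C * x ^ (k+1)‖ = ‖C * x ^ k * x‖ := by rw [pow_succ, mul_assoc]
        _ ≤ ‖C * x ^ k‖ * ‖x‖ := norm_mul_le _ _
        _ ≤ ‖C‖ * ‖x‖ ^ k * ‖x‖ := by gcongr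
        _ = ‖C‖ * ‖x‖ ^ (k+1) := by rw [pow_succ]; ring

open scoped Nat in
private theorem EM_key_hasDerivAt_mexp {m : Type*} [Fintype m] [DecidableEq m]
    (A B : Matrix m m ℝ) (i j : m) :
    HasDerivAt (fun s : ℝ => mexp (A + s • B) i j)
      (mexp (fromBlocks A B 0 A) (Sum.inl i) (Sum.inr j)) 0 := by
  classical
  letI : SeminormedRing (Matrix m m ℝ) := Matrix.linftyOpSemiNormedRing
  letI : NormedRing (Matrix m m ℝ) := Matrix.linftyOpNormedRing
  letI : NormedAlgebra ℝ (Matrix m m ℝ) := Matrix.linftyOpNormedAlgebra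
  letI : CompleteSpace (Matrix m m ℝ) :=
    inferInstance
  letI : SeminormedRing (Matrix (m ⊕ m) (m ⊕ m) ℝ) := Matrix.linftyOpSemiNormedRing
  letI : NormedRing (Matrix (m ⊕ m) (m ⊕ m) ℝ) := Matrix.linftyOpNormedRing
  letI : NormedAlgebra ℝ (Matrix (m ⊕ m) (m ⊕ m) ℝ) := Matrix.linftyOpNormedAlgebra
  letI : CompleteSpace (Matrix (m ⊕ m) (m ⊕ m) ℝ) :=
    inferInstance
  set R : ℝ := max (‖A‖ + ‖B‖) 1 with hR
  have hR1 : (1:ℝ) ≤ R := le_max_right _ _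
  have hR0 : (0:ℝ) ≤ R := zero_le_one.trans hR1
  set f : ℕ → ℝ → Matrix m m ℝ := fun n s => ((n ! : ℝ))⁻¹ • (A + s • B) ^ n with hf
  set f' : ℕ → ℝ → Matrix m m ℝ := fun n s =>
    ((n ! : ℝ))⁻¹ • ∑ k ∈ Finset.range n, (A + s • B) ^ k * B * (A + s • B) ^ (n - 1 - k) with hf'
  set u : ℕ → ℝ := fun n => ‖B‖ * ((n : ℝ) * R ^ n / (n ! : ℝ)) with hu'
  have hu : Summable u := (EM_summable_nat_mul_pow_div_factorial R).mul_left ‖B‖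
  have hderiv : ∀ (n : ℕ) (s : ℝ), s ∈ Metric.ball (0:ℝ) 1 → HasDerivAt (f n) (f' n s) s :=
    fun n s _ => (EM_hasDerivAt_affine_pow A B n s).const_smul ((n ! : ℝ))⁻¹
  have hbound : ∀ (n : ℕ) (s : ℝ), s ∈ Metric.ball (0:ℝ) 1 → ‖f' n s‖ ≤ u n := by
    intro n s hs
    have hs1 : |s| ≤ 1 := le_of_lt (by simpa [Real.dist_eq] using Metric.mem_ball.mp hs)
    have hx : ‖A + s • B‖ ≤ R := by
      calc ‖A + s • B‖ ≤ ‖A‖ + ‖s • B‖ := norm_add_le _ _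
        _ = ‖A‖ + |s| * ‖B‖ := by rw [norm_smul, Real.norm_eq_abs]
        _ ≤ ‖A‖ + 1 * ‖B‖ := by
            gcongr
        _ ≤ R := by rw [one_mul]; exact le_max_left _ _
    have hterm : ∀ k ∈ Finset.range n,
        ‖(A + s • B) ^ k * B * (A + s • B) ^ (n - 1 - k)‖ ≤ ‖B‖ * R ^ n := by
      intro k hk
      have hk' := Finset.mem_range.mp hk
      have h1 : ‖(A + s • B) ^ k * B * (A + s • B) ^ (n - 1 - k)‖
          ≤ ‖A + s • B‖ ^ k * (‖B‖ * ‖A + s • B‖ ^ (n - 1 - k)) := by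
        calc ‖(A + s • B) ^ k * B * (A + s • B) ^ (n - 1 - k)‖
            = ‖(A + s • B) ^ k * (B * (A + s • B) ^ (n - 1 - k))‖ := by rw [mul_assoc]
          _ ≤ ‖A + s • B‖ ^ k * ‖B * (A + s • B) ^ (n - 1 - k)‖ := EM_norm_pow_mul_le _ _ _
          _ ≤ ‖A + s • B‖ ^ k * (‖B‖ * ‖(A + s • B)‖ ^ (n - 1 - k)) :=
              mul_le_mul_of_nonneg_left (EM_norm_mul_pow_le _ _ _) (pow_nonneg (norm_nonneg _) _)
      refine h1.trans ?_
      have hxk : ‖A + s • B‖ ^ k ≤ R ^ k := pow_le_pow_left₀ (norm_nonneg _) hx k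
      have hxk2 : ‖A + s • B‖ ^ (n-1-k) ≤ R ^ (n-1-k) := pow_le_pow_left₀ (norm_nonneg _) hx _
      calc ‖A + s • B‖ ^ k * (‖B‖ * ‖A + s • B‖ ^ (n - 1 - k))
          ≤ R ^ k * (‖B‖ * R ^ (n - 1 - k)) := by
            gcongr
        _ = ‖B‖ * R ^ (k + (n - 1 - k)) := by rw [pow_add]; ring
        _ ≤ ‖B‖ * R ^ n := by
            refine mul_le_mul_of_nonneg_left ?_ (norm_nonneg _)
            exact pow_le_pow_right₀ hR1 (by omega)
    calc ‖f' n s‖ = ((n ! : ℝ))⁻¹ *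
          ‖∑ k ∈ Finset.range n, (A + s • B) ^ k * B * (A + s • B) ^ (n - 1 - k)‖ := by
          rw [hf', norm_smul, Real.norm_eq_abs, abs_of_nonneg (by positivity)]
      _ ≤ ((n ! : ℝ))⁻¹ * ∑ k ∈ Finset.range n, ‖(A + s • B) ^ k * B * (A + s • B) ^ (n - 1 - k)‖ := by
          gcongr
          exact norm_sum_le _ _
      _ ≤ ((n ! : ℝ))⁻¹ * ∑ _k ∈ Finset.range n, ‖B‖ * R ^ n := by
          refine mul_le_mul_of_nonneg_left (Finset.sum_le_sum hterm) (by positivity)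
      _ = ((n ! : ℝ))⁻¹ * ((n : ℝ) * (‖B‖ * R ^ n)) := by
          rw [Finset.sum_const, Finset.card_range]; simp [nsmul_eq_mul]
      _ = u n := by rw [hu']; field_simp
  have hsum0 : Summable (fun n => f n 0) := by
    have := NormedSpace.expSeries_summable' (𝕂 := ℝ) A
    simp only [hf, zero_smul, add_zero]
    exact this
  have H : HasDerivAt (fun s : ℝ => ∑' n, f n s) (∑' n, f' n 0) 0 :=
    hasDerivAt_tsum_of_isPreconnected hu Metric.isOpen_ball
      (convex_ball (0:ℝ) 1).isPreconnected hderiv hbound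
      (Metric.mem_ball_self one_pos) hsum0 (Metric.mem_ball_self one_pos)
  have hfun : (fun s : ℝ => ∑' n, f n s) = fun s : ℝ => mexp (A + s • B) := by
    funext s
    show (∑' n, f n s) = NormedSpace.exp (A + s • B)
    rw [NormedSpace.exp_eq_tsum (𝕂 := ℝ)]
  rw [hfun] at H
  let e : Matrix m m ℝ →ₗ[ℝ] ℝ :=
    { toFun := fun M => M i j, map_add' := fun _ _ => rfl, map_smul' := fun _ _ => rfl }
  let E : Matrix m m ℝ →L[ℝ] ℝ := LinearMap.toContinuousLinearMap e
  have H2 := E.hasFDerivAt.comp_hasDerivAt 0 H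
  have hsum' : Summable (fun n => f' n 0) :=
    Summable.of_norm_bounded hu (fun n => hbound n 0 (Metric.mem_ball_self one_pos))
  have hval : E (∑' n, f' n 0) = mexp (fromBlocks A B 0 A) (Sum.inl i) (Sum.inr j) := by
    rw [E.map_tsum hsum']
    let e2 : Matrix (m ⊕ m) (m ⊕ m) ℝ →ₗ[ℝ] ℝ :=
      { toFun := fun M => M (Sum.inl i) (Sum.inr j), map_add' := fun _ _ => rfl,
        map_smul' := fun _ _ => rfl }
    let E2 : Matrix (m ⊕ m) (m ⊕ m) ℝ →L[ℝ] ℝ := LinearMap.toContinuousLinearMap e2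
    have hexp2 : mexp (fromBlocks A B 0 A)
        = ∑' n : ℕ, ((n ! : ℝ))⁻¹ • (fromBlocks A B 0 A) ^ n := by
      show NormedSpace.exp (fromBlocks A B 0 A) = _
      rw [NormedSpace.exp_eq_tsum (𝕂 := ℝ)]
    have hE2 : mexp (fromBlocks A B 0 A) (Sum.inl i) (Sum.inr j)
        = E2 (∑' n : ℕ, ((n ! : ℝ))⁻¹ • (fromBlocks A B 0 A) ^ n) := by
      rw [← hexp2]; rfl
    rw [hE2, E2.map_tsum (NormedSpace.expSeries_summable' (𝕂 := ℝ) _)]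
    refine tsum_congr fun n => ?_
    have h12 : E2 (((n ! : ℝ))⁻¹ • (fromBlocks A B 0 A) ^ n)
        = ((n ! : ℝ))⁻¹ * (((fromBlocks A B 0 A) ^ n) (Sum.inl i) (Sum.inr j)) := rfl
    rw [h12, EM_fromBlocks_pow]
    show E (f' n 0) = _
    rw [Matrix.fromBlocks_apply₁₂]
    have h13 : E (f' n 0) = ((n ! : ℝ))⁻¹ *
        ((∑ k ∈ Finset.range n, (A + (0:ℝ) • B) ^ k * B * (A + (0:ℝ) • B) ^ (n - 1 - k)) i j) := rfl
    rw [h13]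
    simp
  rw [← hval]
  exact H2

/-- Mixed second derivative of the EM objective: the map
`s ↦ ∂R(Q';Q+sD)/∂q'_{μν}` has derivative at `s = 0` given by the closed-form expression
in terms of block matrix exponentials. -/
theorem hasDerivAt_mixed_second_derivative_EM {h nn : ℕ}
    (Q Q' : Matrix (Fin h) (Fin h) ℝ) (hQ : IsGenerator Q)
    (hQ' : ∀ i j, i ≠ j → 0 < Q' i j)
    (t : Fin (nn + 1) → ℝ) (ht : StrictMono t) (y : Fin (nn + 1) → Fin h)
    (hpos : ∀ s : Fin nn,
      0 < mexp ((t s.succ - t s.castSucc) • Q) (y s.castSucc) (y s.succ))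
    (μ ν α β : Fin h) (hμν : μ ≠ ν) (hαβ : α ≠ β)
    (hQμν : 0 < Q μ ν) (hQαβ : 0 < Q α β) :
    HasDerivAt
      (fun s : ℝ =>
        (Q' μ ν)⁻¹ *
          (∑ s' : Fin nn,
            (mexp ((t s'.succ - t s'.castSucc) • (Q + s • Dmat α β))
                (y s'.castSucc) (y s'.succ))⁻¹ *
              mexp ((t s'.succ - t s'.castSucc) • Cγ μ ν (Q + s • Dmat α β))
                (Sum.inl (y s'.castSucc)) (Sum.inr (y s'.succ))) -
          (∑ s' : Fin nn,
            (mexp ((t s'.succ - t s'.castSucc) • (Q + s • Dmat α β))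
                (y s'.castSucc) (y s'.succ))⁻¹ *
              mexp ((t s'.succ - t s'.castSucc) • Cφ μ (Q + s • Dmat α β))
                (Sum.inl (y s'.castSucc)) (Sum.inr (y s'.succ))))
      (∑ s' : Fin nn,
        ((Q' μ ν)⁻¹ *
          (-(((mexp ((t s'.succ - t s'.castSucc) • Q) (y s'.castSucc) (y s'.succ)) ^ 2)⁻¹) *
              mexp ((t s'.succ - t s'.castSucc) • Cη α β Q)
                (Sum.inl (y s'.castSucc)) (Sum.inr (y s'.succ)) *
              mexp ((t s'.succ - t s'.castSucc) • Cγ μ ν Q)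
                (Sum.inl (y s'.castSucc)) (Sum.inr (y s'.succ)) +
            (mexp ((t s'.succ - t s'.castSucc) • Q) (y s'.castSucc) (y s'.succ))⁻¹ *
              mexp ((t s'.succ - t s'.castSucc) • Cψ μ ν α β Q)
                (Sum.inl (Sum.inl (y s'.castSucc))) (Sum.inr (Sum.inr (y s'.succ)))) -
          (-(((mexp ((t s'.succ - t s'.castSucc) • Q) (y s'.castSucc) (y s'.succ)) ^ 2)⁻¹) *
              mexp ((t s'.succ - t s'.castSucc) • Cη α β Q)
                (Sum.inl (y s'.castSucc)) (Sum.inr (y s'.succ)) *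
              mexp ((t s'.succ - t s'.castSucc) • Cφ μ Q)
                (Sum.inl (y s'.castSucc)) (Sum.inr (y s'.succ)) +
            (mexp ((t s'.succ - t s'.castSucc) • Q) (y s'.castSucc) (y s'.succ))⁻¹ *
              mexp ((t s'.succ - t s'.castSucc) • Cω μ α β Q)
                (Sum.inl (Sum.inl (y s'.castSucc))) (Sum.inr (Sum.inr (y s'.succ))))))
      0 := by
  classical
  have hD : Dmat α β μ ν = (if μ = α then (1:ℝ) else 0) * (if ν = β then (1:ℝ) else 0) := by
    have hA : (Matrix.single α β (1:ℝ)) μ ν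
        = (if μ = α then (1:ℝ) else 0) * (if ν = β then (1:ℝ) else 0) := by
      show (if α = μ ∧ β = ν then (1:ℝ) else 0) = _
      by_cases h1 : μ = α
      · by_cases h2 : ν = β
        · rw [if_pos ⟨h1.symm, h2.symm⟩, if_pos h1, if_pos h2, one_mul]
        · rw [if_neg (fun hc => h2 hc.2.symm), if_neg h2, mul_zero]
      · rw [if_neg (fun hc => h1 hc.1.symm), if_neg h1, zero_mul]
    have hB : (Matrix.single α α (1:ℝ)) μ ν = 0 := by
      show (if α = μ ∧ α = ν then (1:ℝ) else 0) = 0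
      rw [if_neg]
      rintro ⟨h1, h2⟩
      exact hμν (h1 ▸ h2)
    rw [Dmat, Matrix.sub_apply, hA, hB, sub_zero]
  have hCγlin : ∀ s : ℝ, Cγ μ ν (Q + s • Dmat α β) = Cγ μ ν Q + s • Dγ μ ν α β := by
    intro s
    have hval : (Q + s • Dmat α β) μ ν • Matrix.single μ ν (1:ℝ)
        = Q μ ν • Matrix.single μ ν (1:ℝ)
          + (s * ((if μ = α then (1:ℝ) else 0) * (if ν = β then (1:ℝ) else 0))) •
              Matrix.single μ ν (1:ℝ) := by
      rw [← add_smul, Matrix.add_apply, Matrix.smul_apply, hD, smul_eq_mul]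
    rw [Cγ, Cγ, Dγ, Matrix.fromBlocks_smul, Matrix.fromBlocks_add, smul_zero, add_zero,
      hval, smul_smul]
  have hCφlin : ∀ s : ℝ, Cφ μ (Q + s • Dmat α β) = Cφ μ Q + s • Dφ α β := by
    intro s
    rw [Cφ, Cφ, Dφ, Matrix.fromBlocks_smul, Matrix.fromBlocks_add, smul_zero, add_zero, add_zero]
  have h0 : Q + (0:ℝ) • Dmat α β = Q := by rw [zero_smul, add_zero]
  -- the three basic derivatives, for each observation step
  have hkey1 : ∀ s' : Fin nn, HasDerivAt
      (fun s : ℝ => mexp ((t s'.succ - t s'.castSucc) • (Q + s • Dmat α β))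
        (y s'.castSucc) (y s'.succ))
      (mexp ((t s'.succ - t s'.castSucc) • Cη α β Q)
        (Sum.inl (y s'.castSucc)) (Sum.inr (y s'.succ))) 0 := by
    intro s'
    have k := EM_key_hasDerivAt_mexp ((t s'.succ - t s'.castSucc) • Q)
      ((t s'.succ - t s'.castSucc) • Dmat α β) (y s'.castSucc) (y s'.succ)
    have hfun : (fun s : ℝ => mexp ((t s'.succ - t s'.castSucc) • Q
          + s • ((t s'.succ - t s'.castSucc) • Dmat α β)) (y s'.castSucc) (y s'.succ))
        = fun s : ℝ => mexp ((t s'.succ - t s'.castSucc) • (Q + s • Dmat α β))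
            (y s'.castSucc) (y s'.succ) := by
      funext s
      rw [smul_add, smul_comm]
    have hm : Matrix.fromBlocks ((t s'.succ - t s'.castSucc) • Q)
          ((t s'.succ - t s'.castSucc) • Dmat α β) 0 ((t s'.succ - t s'.castSucc) • Q)
        = (t s'.succ - t s'.castSucc) • Cη α β Q := by
      rw [Cη, Matrix.fromBlocks_smul, smul_zero]
    rw [hfun, hm] at k
    exact k
  have hkey2 : ∀ s' : Fin nn, HasDerivAt
      (fun s : ℝ => mexp ((t s'.succ - t s'.castSucc) • Cγ μ ν (Q + s • Dmat α β))
        (Sum.inl (y s'.castSucc)) (Sum.inr (y s'.succ)))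
      (mexp ((t s'.succ - t s'.castSucc) • Cψ μ ν α β Q)
        (Sum.inl (Sum.inl (y s'.castSucc))) (Sum.inr (Sum.inr (y s'.succ)))) 0 := by
    intro s'
    have k := EM_key_hasDerivAt_mexp ((t s'.succ - t s'.castSucc) • Cγ μ ν Q)
      ((t s'.succ - t s'.castSucc) • Dγ μ ν α β)
      (Sum.inl (y s'.castSucc)) (Sum.inr (y s'.succ))
    have hfun : (fun s : ℝ => mexp ((t s'.succ - t s'.castSucc) • Cγ μ ν Q
          + s • ((t s'.succ - t s'.castSucc) • Dγ μ ν α β))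
          (Sum.inl (y s'.castSucc)) (Sum.inr (y s'.succ)))
        = fun s : ℝ => mexp ((t s'.succ - t s'.castSucc) • Cγ μ ν (Q + s • Dmat α β))
            (Sum.inl (y s'.castSucc)) (Sum.inr (y s'.succ)) := by
      funext s
      rw [hCγlin s, smul_add, smul_comm]
    have hm : Matrix.fromBlocks ((t s'.succ - t s'.castSucc) • Cγ μ ν Q)
          ((t s'.succ - t s'.castSucc) • Dγ μ ν α β) 0
          ((t s'.succ - t s'.castSucc) • Cγ μ ν Q)
        = (t s'.succ - t s'.castSucc) • Cψ μ ν α β Q := by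
      rw [Cψ, Matrix.fromBlocks_smul, smul_zero]
    rw [hfun, hm] at k
    exact k
  have hkey3 : ∀ s' : Fin nn, HasDerivAt
      (fun s : ℝ => mexp ((t s'.succ - t s'.castSucc) • Cφ μ (Q + s • Dmat α β))
        (Sum.inl (y s'.castSucc)) (Sum.inr (y s'.succ)))
      (mexp ((t s'.succ - t s'.castSucc) • Cω μ α β Q)
        (Sum.inl (Sum.inl (y s'.castSucc))) (Sum.inr (Sum.inr (y s'.succ)))) 0 := by
    intro s'
    have k := EM_key_hasDerivAt_mexp ((t s'.succ - t s'.castSucc) • Cφ μ Q)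
      ((t s'.succ - t s'.castSucc) • Dφ α β)
      (Sum.inl (y s'.castSucc)) (Sum.inr (y s'.succ))
    have hfun : (fun s : ℝ => mexp ((t s'.succ - t s'.castSucc) • Cφ μ Q
          + s • ((t s'.succ - t s'.castSucc) • Dφ α β))
          (Sum.inl (y s'.castSucc)) (Sum.inr (y s'.succ)))
        = fun s : ℝ => mexp ((t s'.succ - t s'.castSucc) • Cφ μ (Q + s • Dmat α β))
            (Sum.inl (y s'.castSucc)) (Sum.inr (y s'.succ)) := by
      funext s
      rw [hCφlin s, smul_add, smul_comm]
    have hm : Matrix.fromBlocks ((t s'.succ - t s'.castSucc) • Cφ μ Q)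
          ((t s'.succ - t s'.castSucc) • Dφ α β) 0
          ((t s'.succ - t s'.castSucc) • Cφ μ Q)
        = (t s'.succ - t s'.castSucc) • Cω μ α β Q := by
      rw [Cω, Matrix.fromBlocks_smul, smul_zero]
    rw [hfun, hm] at k
    exact k
  -- per-term derivatives of the two quotient-type expressions
  have hterm2 : ∀ s' : Fin nn, HasDerivAt
      (fun s : ℝ => (mexp ((t s'.succ - t s'.castSucc) • (Q + s • Dmat α β))
            (y s'.castSucc) (y s'.succ))⁻¹ *
          mexp ((t s'.succ - t s'.castSucc) • Cγ μ ν (Q + s • Dmat α β))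
            (Sum.inl (y s'.castSucc)) (Sum.inr (y s'.succ)))
      (-(mexp ((t s'.succ - t s'.castSucc) • Cη α β Q)
            (Sum.inl (y s'.castSucc)) (Sum.inr (y s'.succ))) /
          (mexp ((t s'.succ - t s'.castSucc) • Q) (y s'.castSucc) (y s'.succ)) ^ 2 *
          mexp ((t s'.succ - t s'.castSucc) • Cγ μ ν Q)
            (Sum.inl (y s'.castSucc)) (Sum.inr (y s'.succ)) +
        (mexp ((t s'.succ - t s'.castSucc) • Q) (y s'.castSucc) (y s'.succ))⁻¹ *
          mexp ((t s'.succ - t s'.castSucc) • Cψ μ ν α β Q)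
            (Sum.inl (Sum.inl (y s'.castSucc))) (Sum.inr (Sum.inr (y s'.succ)))) 0 := by
    intro s'
    have hne : (fun s : ℝ => mexp ((t s'.succ - t s'.castSucc) • (Q + s • Dmat α β))
        (y s'.castSucc) (y s'.succ)) 0 ≠ 0 := by
      show mexp ((t s'.succ - t s'.castSucc) • (Q + (0:ℝ) • Dmat α β))
        (y s'.castSucc) (y s'.succ) ≠ 0
      rw [h0]
      exact (hpos s').ne'
    have hmul := ((hkey1 s').fun_inv hne).fun_mul (hkey2 s')
    simp only [h0] at hmul
    exact hmul
  have hterm3 : ∀ s' : Fin nn, HasDerivAt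
      (fun s : ℝ => (mexp ((t s'.succ - t s'.castSucc) • (Q + s • Dmat α β))
            (y s'.castSucc) (y s'.succ))⁻¹ *
          mexp ((t s'.succ - t s'.castSucc) • Cφ μ (Q + s • Dmat α β))
            (Sum.inl (y s'.castSucc)) (Sum.inr (y s'.succ)))
      (-(mexp ((t s'.succ - t s'.castSucc) • Cη α β Q)
            (Sum.inl (y s'.castSucc)) (Sum.inr (y s'.succ))) /
          (mexp ((t s'.succ - t s'.castSucc) • Q) (y s'.castSucc) (y s'.succ)) ^ 2 *
          mexp ((t s'.succ - t s'.castSucc) • Cφ μ Q)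
            (Sum.inl (y s'.castSucc)) (Sum.inr (y s'.succ)) +
        (mexp ((t s'.succ - t s'.castSucc) • Q) (y s'.castSucc) (y s'.succ))⁻¹ *
          mexp ((t s'.succ - t s'.castSucc) • Cω μ α β Q)
            (Sum.inl (Sum.inl (y s'.castSucc))) (Sum.inr (Sum.inr (y s'.succ)))) 0 := by
    intro s'
    have hne : (fun s : ℝ => mexp ((t s'.succ - t s'.castSucc) • (Q + s • Dmat α β))
        (y s'.castSucc) (y s'.succ)) 0 ≠ 0 := by
      show mexp ((t s'.succ - t s'.castSucc) • (Q + (0:ℝ) • Dmat α β))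
        (y s'.castSucc) (y s'.succ) ≠ 0
      rw [h0]
      exact (hpos s').ne'
    have hmul := ((hkey1 s').fun_inv hne).fun_mul (hkey3 s')
    simp only [h0] at hmul
    exact hmul
  have hS2 := HasDerivAt.fun_sum (fun s' (_ : s' ∈ Finset.univ) => hterm2 s')
  have hS3 := HasDerivAt.fun_sum (fun s' (_ : s' ∈ Finset.univ) => hterm3 s')
  have H := (hS2.const_mul ((Q' μ ν)⁻¹)).fun_sub hS3
  refine H.congr_deriv ?_
  rw [Finset.mul_sum, ← Finset.sum_sub_distrib]
  refine Finset.sum_congr rfl fun s' _ => ?_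
  ring
end

section
/- (Lemma 2.6, Oakes' identity for the observed information, one-dimensional parameter.) Let (X, μ) be a measure space and f : ℝ × X → ℝ with f(ψ, x) > 0 for all ψ and μ-a.e. x, and f(ψ, ·) integrable for every ψ. Define F(ψ) = ∫ f(ψ, x) dμ(x), L(ψ) = log F(ψ), H(ψ', ψ) = ∫ log f(ψ', x) · f(ψ, x) dμ(x), and R(ψ', ψ) = H(ψ', ψ)/F(ψ). Assume there are measurable functions f₁, f₂ : ℝ × X → ℝ such that for μ-a.e. x the map ψ ↦ f(ψ, x) is twice differentiable with first and second derivatives f₁(ψ, x) and f₂(ψ, x), that all the integrals below exist, and that differentiation under the integral sign is valid in the following sense: F'(ψ) = ∫ f₁(ψ,x) dμ, F''(ψ) = ∫ f₂(ψ,x) dμ, ∂H/∂ψ'(ψ',ψ) = ∫ (f₁(ψ',x)/f(ψ',x))·f(ψ,x) dμ, ∂²H/∂ψ'²(ψ',ψ) = ∫ (f₂(ψ',x)/f(ψ',x) − f₁(ψ',x)²/f(ψ',x)²)·f(ψ,x) dμ, and ∂²H/∂ψ'∂ψ(ψ',ψ) = ∫ (f₁(ψ',x)/f(ψ',x))·f₁(ψ,x)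 dμ. Then for every ψ, L''(ψ) = [∂²R/∂ψ'²(ψ',ψ) + ∂²R/∂ψ'∂ψ(ψ',ψ)] evaluated at ψ' = ψ. -/
set_option autoImplicit false

open MeasureTheory

open Filter

set_option maxHeartbeats 1000000

/-- Second-order one-sided Taylor: if `φ` has derivative `q` on a neighborhood of `ψ`,
`q ψ = 0` and `q` has derivative `c` at `ψ`, then `(φ(ψ+h) - φ ψ) * (2/h²) → c` as `h → 0⁺`. -/
theorem taylor_within {φ q : ℝ → ℝ} {ψ c : ℝ} {s : Set ℝ} (hs : s ∈ nhds ψ)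
    (hφ : ∀ t ∈ s, HasDerivAt φ (q t) t) (h0 : q ψ = 0) (hq : HasDerivAt q c ψ) :
    Tendsto (fun h : ℝ => (φ (ψ + h) - φ ψ) * (2 / h ^ 2)) (nhdsWithin 0 (Set.Ioi 0))
      (nhds c) := by
  rw [Metric.tendsto_nhdsWithin_nhds]
  intro ε hε
  have hlo := (hasDerivAt_iff_isLittleO.mp hq).def (show (0:ℝ) < ε/4 by linarith)
  have hmem : {x : ℝ | ‖q x - q ψ - (x - ψ) • c‖ ≤ ε / 4 * ‖x - ψ‖} ∩ s ∈ nhds ψ :=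
    Filter.inter_mem hlo hs
  obtain ⟨δ, hδpos, hδ⟩ := Metric.mem_nhds_iff.mp hmem
  refine ⟨δ, hδpos, ?_⟩
  intro h hh hd
  have hhpos : (0:ℝ) < h := hh
  have hhδ : h < δ := by
    have := hd
    rw [Real.dist_eq, sub_zero, abs_of_pos hhpos] at this
    exact this
  set g : ℝ → ℝ := fun t => φ t - c / 2 * (t - ψ) ^ 2 with hg
  have hsub : Set.Icc ψ (ψ + h) ⊆ Metric.ball ψ δ := by
    intro t ht
    rw [Metric.mem_ball, Real.dist_eq, abs_lt]
    constructor <;> [linarith [ht.1]; linarith [ht.2]]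
  have hgd : ∀ t ∈ Set.Icc ψ (ψ + h),
      HasDerivWithinAt g (q t - c * (t - ψ)) (Set.Icc ψ (ψ + h)) t := by
    intro t ht
    have hts : t ∈ s := (hδ (hsub ht)).2
    have h1 : HasDerivAt (fun t : ℝ => c / 2 * (t - ψ) ^ 2)
        (c / 2 * (↑(2:ℕ) * (t - ψ) ^ (2 - 1) * 1)) t :=
      (((hasDerivAt_id t).sub_const ψ).pow 2).const_mul (c / 2)
    have h2 : c / 2 * (↑(2:ℕ) * (t - ψ) ^ (2 - 1) * 1) = c * (t - ψ) := by
      push_cast; ring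
    rw [h2] at h1
    exact ((hφ t hts).sub h1).hasDerivWithinAt
  have hbound : ∀ t ∈ Set.Icc ψ (ψ + h), ‖q t - c * (t - ψ)‖ ≤ ε / 4 * h := by
    intro t ht
    have hb := (hδ (hsub ht)).1
    simp only [Set.mem_setOf_eq, h0, sub_zero, smul_eq_mul] at hb
    have h3 : ‖t - ψ‖ ≤ h := by
      rw [Real.norm_eq_abs, abs_of_nonneg (by linarith [ht.1])]
      linarith [ht.2]
    have h4 : q t - c * (t - ψ) = q t - (t - ψ) * c := by ring
    rw [h4]
    calc ‖q t - (t - ψ) * c‖ ≤ ε / 4 * ‖t - ψ‖ := hb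
      _ ≤ ε / 4 * h := by nlinarith [norm_nonneg (t - ψ)]
  have hmvt := Convex.norm_image_sub_le_of_norm_hasDerivWithin_le hgd hbound
    (convex_Icc ψ (ψ + h)) (Set.left_mem_Icc.mpr (by linarith)) 
    (Set.right_mem_Icc.mpr (by linarith))
  have hgval : g (ψ + h) - g ψ = (φ (ψ + h) - φ ψ) - c / 2 * h ^ 2 := by
    simp only [hg]; ring
  rw [hgval] at hmvt
  have hnorm : ‖ψ + h - ψ‖ = h := by
    rw [Real.norm_eq_abs]; rw [show ψ + h - ψ = h by ring, abs_of_pos hhpos]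
  rw [hnorm] at hmvt
  rw [Real.dist_eq]
  have hh2 : (0:ℝ) < h ^ 2 := by positivity
  have heq : (φ (ψ + h) - φ ψ) * (2 / h ^ 2) - c
      = ((φ (ψ + h) - φ ψ) - c / 2 * h ^ 2) * (2 / h ^ 2) := by
    field_simp
  rw [heq, abs_mul, abs_of_pos (by positivity : (0:ℝ) < 2 / h ^ 2)]
  have : |(φ (ψ + h) - φ ψ) - c / 2 * h ^ 2| ≤ ε / 4 * h * h := by
    rw [← Real.norm_eq_abs]; exact hmvt
  calc |(φ (ψ + h) - φ ψ) - c / 2 * h ^ 2| * (2 / h ^ 2)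
      ≤ (ε / 4 * h * h) * (2 / h ^ 2) := by
        apply mul_le_mul_of_nonneg_right this (by positivity)
    _ = ε / 2 := by field_simp; ring
    _ < ε := by linarith

theorem taylor_seq {φ q : ℝ → ℝ} {ψ c : ℝ} {s : Set ℝ} (hs : s ∈ nhds ψ)
    (hφ : ∀ t ∈ s, HasDerivAt φ (q t) t) (h0 : q ψ = 0) (hq : HasDerivAt q c ψ) :
    Tendsto (fun k : ℕ => (φ (ψ + 1 / ((k : ℝ) + 1)) - φ ψ) * (2 / (1 / ((k : ℝ) + 1)) ^ 2))
      atTop (nhds c) := by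
  have hseq : Tendsto (fun k : ℕ => 1 / ((k : ℝ) + 1)) atTop (nhdsWithin 0 (Set.Ioi 0)) :=
    tendsto_nhdsWithin_of_tendsto_nhds_of_eventually_within _
      tendsto_one_div_add_atTop_nhds_zero_nat
      (Filter.Eventually.of_forall fun k => Set.mem_Ioi.mpr (by positivity))
  exact (taylor_within hs hφ h0 hq).comp hseq

/-- Oakes' identity for the observed information (one-dimensional parameter): under
regularity conditions allowing differentiation under the integral sign, the second
derivative of the observed log-likelihood `L = log ∘ F` satisfies
`L''(ψ) = [∂²R/∂ψ'² + ∂²R/∂ψ'∂ψ]_{ψ' = ψ}` for the EM objective `R(ψ',ψ) = H(ψ',ψ)/F(ψ)`. -/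
theorem oakes_identity {X : Type*} [MeasurableSpace X] (μ : Measure X)
    (f f₁ f₂ : ℝ → X → ℝ)
    (hfpos : ∀ ψ : ℝ, ∀ᵐ x ∂μ, 0 < f ψ x)
    (hfint : ∀ ψ : ℝ, Integrable (f ψ) μ)
    (hf₁m : ∀ ψ : ℝ, Measurable (f₁ ψ)) (hf₂m : ∀ ψ : ℝ, Measurable (f₂ ψ))
    (hderiv : ∀ᵐ x ∂μ, ∀ ψ : ℝ,
      HasDerivAt (fun a => f a x) (f₁ ψ x) ψ ∧ HasDerivAt (fun a => f₁ a x) (f₂ ψ x) ψ)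
    (F L : ℝ → ℝ) (H R : ℝ → ℝ → ℝ)
    (hF : F = fun ψ => ∫ x, f ψ x ∂μ)
    (hL : L = fun ψ => Real.log (F ψ))
    (hH : H = fun ψ' ψ => ∫ x, Real.log (f ψ' x) * f ψ x ∂μ)
    (hR : R = fun ψ' ψ => H ψ' ψ / F ψ)
    (hHint : ∀ ψ' ψ : ℝ, Integrable (fun x => Real.log (f ψ' x) * f ψ x) μ)
    (hF' : ∀ ψ : ℝ, HasDerivAt F (∫ x, f₁ ψ x ∂μ) ψ)
    (hF'' : ∀ ψ : ℝ, HasDerivAt (fun a => ∫ x, f₁ a x ∂μ) (∫ x, f₂ ψ x ∂μ) ψ)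
    (hH₁ : ∀ ψ' ψ : ℝ, HasDerivAt (fun a => H a ψ)
      (∫ x, f₁ ψ' x / f ψ' x * f ψ x ∂μ) ψ')
    (hH₁₁ : ∀ ψ' ψ : ℝ, HasDerivAt (fun a => ∫ x, f₁ a x / f a x * f ψ x ∂μ)
      (∫ x, (f₂ ψ' x / f ψ' x - (f₁ ψ' x) ^ 2 / (f ψ' x) ^ 2) * f ψ x ∂μ) ψ')
    (hH₁₂ : ∀ ψ' ψ : ℝ, HasDerivAt (fun b => ∫ x, f₁ ψ' x / f ψ' x * f b x ∂μ)
      (∫ x, f₁ ψ' x / f ψ' x * f₁ ψ x ∂μ) ψ) :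
    ∀ ψ : ℝ, deriv (deriv L) ψ =
      deriv (fun a => deriv (fun a' => R a' ψ) a) ψ +
        deriv (fun b => deriv (fun a => R a b) ψ) ψ := by
  rcases eq_or_ne μ 0 with rfl | hμ
  · subst hF hL hH hR
    intro ψ
    simp [integral_zero_measure, Real.log_zero, deriv_const']
  · intro ψ
    -- positivity of F everywhere
    have hFpos : ∀ t, 0 < F t := by
      intro t
      rw [hF]
      rw [integral_pos_iff_support_of_nonneg_ae
        (by filter_upwards [hfpos t] with x hx; exact hx.le) (hfint t)]
      by_contra hc
      push_neg at hc
      have hz : μ (Function.support (f t)) = 0 := le_antisymm hc zero_le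
      have h1 : ∀ᵐ x ∂μ, x ∉ Function.support (f t) :=
        (ae_iff.mpr (by simp only [not_not]; exact hz))
      have : ∀ᵐ x ∂μ, False := by
        filter_upwards [hfpos t, h1] with x hx h2
        exact h2 (by simp [Function.mem_support]; positivity)
      have hne : (ae μ).NeBot := ae_neBot.mpr hμ
      exact (this.exists).elim fun x hx => hx
    have hne : ∀ t, F t ≠ 0 := fun t => (hFpos t).ne'
    have hfae : ∀ᵐ x ∂μ, 0 < f ψ x := hfpos ψ
    have e1 : ∫ x, f₁ ψ x / f ψ x * f ψ x ∂μ = ∫ x, f₁ ψ x ∂μ := by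
      apply integral_congr_ae
      filter_upwards [hfae] with x hx
      field_simp
    -- LHS
    have hderivL : deriv L = fun t => (∫ x, f₁ t x ∂μ) / F t := by
      funext t
      rw [hL]
      exact ((hF' t).log (hne t)).deriv
    have hLHS : deriv (deriv L) ψ =
        ((∫ x, f₂ ψ x ∂μ) * F ψ - (∫ x, f₁ ψ x ∂μ) * (∫ x, f₁ ψ x ∂μ)) / F ψ ^ 2 := by
      rw [hderivL]
      exact ((hF'' ψ).div (hF' ψ) (hne ψ)).deriv
    -- RHS term 1
    have ht1f : (fun a => deriv (fun a' => R a' ψ) a)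
        = fun a => (∫ x, f₁ a x / f a x * f ψ x ∂μ) / F ψ := by
      funext a
      simp only [hR]
      exact ((hH₁ a ψ).div_const (F ψ)).deriv
    have ht1 : deriv (fun a => deriv (fun a' => R a' ψ) a) ψ
        = (∫ x, (f₂ ψ x / f ψ x - (f₁ ψ x) ^ 2 / (f ψ x) ^ 2) * f ψ x ∂μ) / F ψ := by
      rw [ht1f]
      exact ((hH₁₁ ψ ψ).div_const (F ψ)).deriv
    -- RHS term 2
    have ht2f : (fun b => deriv (fun a => R a b) ψ)
        = fun b => (∫ x, f₁ ψ x / f ψ x * f b x ∂μ) / F b := by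
      funext b
      simp only [hR]
      exact ((hH₁ ψ b).div_const (F b)).deriv
    have ht2 : deriv (fun b => deriv (fun a => R a b) ψ) ψ
        = ((∫ x, f₁ ψ x / f ψ x * f₁ ψ x ∂μ) * F ψ
            - (∫ x, f₁ ψ x ∂μ) * (∫ x, f₁ ψ x ∂μ)) / F ψ ^ 2 := by
      rw [ht2f]
      have h := ((hH₁₂ ψ ψ).div (hF' ψ) (hne ψ)).deriv
      rw [e1] at h
      exact h
    -- KEY identity
    have key : (∫ x, f₂ ψ x ∂μ)
        = (∫ x, (f₂ ψ x / f ψ x - (f₁ ψ x) ^ 2 / (f ψ x) ^ 2) * f ψ x ∂μ)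
          + (∫ x, f₁ ψ x / f ψ x * f₁ ψ x ∂μ) := by
      set v : X → ℝ := fun x => f₁ ψ x / f ψ x * f₁ ψ x with hv
      set W : ℕ → X → ℝ := fun k x =>
        ((f (ψ + 1 / ((k : ℝ) + 1)) x - f ψ x)
          - (Real.log (f (ψ + 1 / ((k : ℝ) + 1)) x) * f ψ x - Real.log (f ψ x) * f ψ x))
          * (2 / (1 / ((k : ℝ) + 1)) ^ 2) with hW
      have hWint : ∀ k : ℕ, Integrable (W k) μ := by
        intro k
        exact (((hfint _).sub (hfint ψ)).sub
          ((hHint (ψ + 1 / ((k : ℝ) + 1)) ψ).sub (hHint ψ ψ))).mul_const _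
      have hAE : ∀ᵐ x ∂μ, 0 < f ψ x ∧ (∀ k : ℕ, 0 < f (ψ + 1 / ((k : ℝ) + 1)) x) ∧
          ∀ t : ℝ, HasDerivAt (fun a => f a x) (f₁ t x) t ∧
            HasDerivAt (fun a => f₁ a x) (f₂ t x) t :=
        (hfpos ψ).and (((ae_all_iff (ι := ℕ)).mpr fun k => hfpos (ψ + 1 / ((k : ℝ) + 1))).and hderiv)
      have hWnonneg : ∀ k : ℕ, 0 ≤ᵐ[μ] W k := by
        intro k
        filter_upwards [hAE] with x hx
        obtain ⟨hb, hak, -⟩ := hx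
        have ha := hak k
        simp only [hW]
        set a := f (ψ + 1 / ((k : ℝ) + 1)) x
        set b := f ψ x
        have hlog : Real.log a - Real.log b ≤ a / b - 1 := by
          have h := Real.log_le_sub_one_of_pos (div_pos ha hb)
          rwa [Real.log_div ha.ne' hb.ne'] at h
        have h5 : (Real.log a - Real.log b) * b ≤ (a / b - 1) * b :=
          mul_le_mul_of_nonneg_right hlog hb.le
        have h6 : (a / b - 1) * b = a - b := by field_simp
        have h7 : 0 ≤ (a - b) - (Real.log a * b - Real.log b * b) := by nlinarith [h5, h6]
        exact mul_nonneg h7 (by positivity)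
      have hWtend : ∀ᵐ x ∂μ, Tendsto (fun k => W k x) atTop (nhds (v x)) := by
        filter_upwards [hAE] with x hx
        obtain ⟨hb, hak, hd⟩ := hx
        have hcont : Continuous (fun t => f t x) :=
          continuous_iff_continuousAt.mpr fun t => (hd t).1.continuousAt
        have hsopen : IsOpen {t : ℝ | 0 < f t x} := isOpen_lt continuous_const hcont
        have hsnhds : {t : ℝ | 0 < f t x} ∈ nhds ψ := hsopen.mem_nhds hb
        have hφx : ∀ t ∈ {t : ℝ | 0 < f t x},
            HasDerivAt (fun t => f t x - f ψ x * Real.log (f t x))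
              (f₁ t x - f ψ x * (f₁ t x / f t x)) t := by
          intro t ht
          exact (hd t).1.sub (((hd t).1.log (ne_of_gt ht)).const_mul (f ψ x))
        have h0x : f₁ ψ x - f ψ x * (f₁ ψ x / f ψ x) = 0 := by
          field_simp
          ring
        have hqx : HasDerivAt (fun t => f₁ t x - f ψ x * (f₁ t x / f t x)) (v x) ψ := by
          have h1 : HasDerivAt (fun t => f₁ t x - f ψ x * (f₁ t x / f t x))
              (f₂ ψ x - f ψ x * ((f₂ ψ x * f ψ x - f₁ ψ x * f₁ ψ x) / f ψ x ^ 2)) ψ :=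
            (hd ψ).2.sub (((hd ψ).2.div (hd ψ).1 hb.ne').const_mul (f ψ x))
          convert h1 using 1
          simp only [hv]
          field_simp
          ring
        have htay := taylor_seq hsnhds hφx h0x hqx
        apply htay.congr
        intro k
        simp only [hW]
        ring
      have hctend : Tendsto (fun k => ∫ x, W k x ∂μ) atTop
          (nhds ((∫ x, f₂ ψ x ∂μ)
            - ∫ x, (f₂ ψ x / f ψ x - (f₁ ψ x) ^ 2 / (f ψ x) ^ 2) * f ψ x ∂μ)) := by
        have hφ : ∀ t ∈ (Set.univ : Set ℝ), HasDerivAt (fun t => F t - H t ψ)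
            ((∫ x, f₁ t x ∂μ) - ∫ x, f₁ t x / f t x * f ψ x ∂μ) t :=
          fun t _ => (hF' t).sub (hH₁ t ψ)
        have h0 : (∫ x, f₁ ψ x ∂μ) - (∫ x, f₁ ψ x / f ψ x * f ψ x ∂μ) = 0 := by
          rw [e1]; ring
        have hq : HasDerivAt
            (fun t => (∫ x, f₁ t x ∂μ) - ∫ x, f₁ t x / f t x * f ψ x ∂μ)
            ((∫ x, f₂ ψ x ∂μ)
              - ∫ x, (f₂ ψ x / f ψ x - (f₁ ψ x) ^ 2 / (f ψ x) ^ 2) * f ψ x ∂μ) ψ :=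
          (hF'' ψ).sub (hH₁₁ ψ ψ)
        have htay := taylor_seq Filter.univ_mem hφ h0 hq
        apply htay.congr
        intro k
        simp only [hW]
        have i1 : Integrable (fun x => f (ψ + 1 / ((k : ℝ) + 1)) x - f ψ x) μ :=
          (hfint _).sub (hfint ψ)
        have i2 : Integrable (fun x => Real.log (f (ψ + 1 / ((k : ℝ) + 1)) x) * f ψ x
            - Real.log (f ψ x) * f ψ x) μ := (hHint _ ψ).sub (hHint ψ ψ)
        rw [integral_mul_const, integral_sub i1 i2,
          integral_sub (hfint _) (hfint ψ), integral_sub (hHint _ ψ) (hHint ψ ψ)]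
        simp only [hF, hH]
        ring
      have hWaem : ∀ k : ℕ, AEMeasurable (fun x => ENNReal.ofReal (W k x)) μ :=
        fun k => (hWint k).aemeasurable.ennreal_ofReal
      have hvnonneg : 0 ≤ᵐ[μ] v := by
        filter_upwards [hfae] with x hx
        simp only [hv]
        have h : f₁ ψ x / f ψ x * f₁ ψ x = f₁ ψ x ^ 2 / f ψ x := by ring
        rw [h]
        positivity
      have hfatou : ∫⁻ x, ENNReal.ofReal (v x) ∂μ ≤
          ENNReal.ofReal ((∫ x, f₂ ψ x ∂μ)
            - ∫ x, (f₂ ψ x / f ψ x - (f₁ ψ x) ^ 2 / (f ψ x) ^ 2) * f ψ x ∂μ) := by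
        have h1 : ∫⁻ x, ENNReal.ofReal (v x) ∂μ
            ≤ ∫⁻ x, liminf (fun k => ENNReal.ofReal (W k x)) atTop ∂μ := by
          apply lintegral_mono_ae
          filter_upwards [hWtend] with x hx
          exact le_of_eq ((ENNReal.tendsto_ofReal hx).liminf_eq).symm
        have h2 := lintegral_liminf_le' (u := atTop) hWaem
        have h3 : liminf (fun k => ∫⁻ x, ENNReal.ofReal (W k x) ∂μ) atTop
            = ENNReal.ofReal ((∫ x, f₂ ψ x ∂μ)
              - ∫ x, (f₂ ψ x / f ψ x - (f₁ ψ x) ^ 2 / (f ψ x) ^ 2) * f ψ x ∂μ) := by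
          have h4 : (fun k => ∫⁻ x, ENNReal.ofReal (W k x) ∂μ)
              = fun k => ENNReal.ofReal (∫ x, W k x ∂μ) :=
            funext fun k => (ofReal_integral_eq_lintegral_ofReal (hWint k) (hWnonneg k)).symm
          rw [h4]
          exact (ENNReal.tendsto_ofReal hctend).liminf_eq
        exact h1.trans (h2.trans_eq h3)
      have hvint : Integrable v μ := by
        refine ⟨?_, ?_⟩
        · exact (((hf₁m ψ).aemeasurable.div
            (hfint ψ).aemeasurable).mul (hf₁m ψ).aemeasurable).aestronglyMeasurable
        · rw [hasFiniteIntegral_iff_ofReal hvnonneg]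
          exact lt_of_le_of_lt hfatou ENNReal.ofReal_lt_top
      by_cases h2 : Integrable (fun x => f₂ ψ x) μ
      · have hueq : (fun x => (f₂ ψ x / f ψ x - (f₁ ψ x) ^ 2 / (f ψ x) ^ 2) * f ψ x)
            =ᵐ[μ] fun x => f₂ ψ x - v x := by
          filter_upwards [hfae] with x hx
          simp only [hv]
          field_simp
        have hA : ∫ x, (f₂ ψ x / f ψ x - (f₁ ψ x) ^ 2 / (f ψ x) ^ 2) * f ψ x ∂μ
            = (∫ x, f₂ ψ x ∂μ) - ∫ x, v x ∂μ := by
          rw [integral_congr_ae hueq, integral_sub h2 hvint]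
        rw [hA]
        ring
      · have hu : ¬ Integrable
            (fun x => (f₂ ψ x / f ψ x - (f₁ ψ x) ^ 2 / (f ψ x) ^ 2) * f ψ x) μ := by
          intro hu
          apply h2
          have h5 := hu.add hvint
          apply h5.congr
          filter_upwards [hfae] with x hx
          simp only [hv, Pi.add_apply]
          field_simp
          ring
        have hT2 : ∫ x, f₂ ψ x ∂μ = 0 := integral_undef h2
        have hA : ∫ x, (f₂ ψ x / f ψ x - (f₁ ψ x) ^ 2 / (f ψ x) ^ 2) * f ψ x ∂μ = 0 :=
          integral_undef hu
        have h00 : ∫⁻ x, ENNReal.ofReal (v x) ∂μ = 0 := by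
          apply le_antisymm _ zero_le
          rw [hT2, hA] at hfatou
          simpa using hfatou
        have hvae : v =ᵐ[μ] 0 := by
          have h6 := (lintegral_eq_zero_iff' hvint.aemeasurable.ennreal_ofReal).mp h00
          filter_upwards [h6, hvnonneg] with x hx1 hx2
          have hx3 : v x ≤ 0 := ENNReal.ofReal_eq_zero.mp hx1
          exact le_antisymm hx3 hx2
        have hC : ∫ x, v x ∂μ = 0 := integral_eq_zero_of_ae hvae
        rw [hT2, hA, hC]
        ring
    rw [hLHS, ht1, ht2, key]
    have halg : ∀ (A C B Fv : ℝ), Fv ≠ 0 →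
        ((A + C) * Fv - B * B) / Fv ^ 2 = A / Fv + (C * Fv - B * B) / Fv ^ 2 := by
      intros A C B Fv hFv
      field_simp
      ring
    exact halg _ _ _ _ (hne ψ)
end

section
/- (One-jump lower bound on off-diagonal transition probabilities, used in the proof of Lemma 2.3.) Let Q be an h×h generator matrix and M ≥ 0 a real number with −q_{cc} ≤ M for every c ∈ {1,…,h}. Then for all states a ≠ b and every t ≥ 0, (exp(tQ))_{ab} ≥ q_{ab} · t · exp(−M·t). -/
/-!
Shift the generator to `P = M • 1 + Q`, which is entrywise nonnegative because the exit rates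
`-q_cc` are at most `M`. Since `M • 1` is central, `exp (t Q) = exp (-M t) • exp (t P)`, and the
exponential series of a nonnegative matrix dominates its first-order term, so
`exp (t P)_{ab} ≥ t P_{ab} = t q_{ab}` for `a ≠ b`.
-/

set_option autoImplicit false

open Matrix

namespace Matrix

variable {n : Type*} [Fintype n] [DecidableEq n]

open Nat in
theorem hasSum_exp_apply (A : Matrix n n ℝ) (i j : n) :
    HasSum (fun k => (k !⁻¹ : ℝ) * (A ^ k) i j) (NormedSpace.exp A i j) := by
  let : NormedRing (Matrix n n ℝ) := Matrix.linftyOpNormedRing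
  let : NormedAlgebra ℝ (Matrix n n ℝ) := Matrix.linftyOpNormedAlgebra
  exact Pi.hasSum.mp (Pi.hasSum.mp (NormedSpace.exp_series_hasSum_exp' (𝕂 := ℝ) A) i) j

theorem apply_le_exp_apply_of_nonneg {A : Matrix n n ℝ} (hA : ∀ i j, 0 ≤ A i j) (i j : n) :
    A i j ≤ NormedSpace.exp A i j := by
  simpa using le_hasSum (hasSum_exp_apply A i j) 1 fun k _ =>
    mul_nonneg (by positivity) (pow_apply_nonneg hA k i j)

theorem exp_smul_one_add (c : ℝ) (A : Matrix n n ℝ) :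
    NormedSpace.exp (c • 1 + A) = Real.exp c • NormedSpace.exp A := by
  rw [exp_add_of_commute _ _ ((Commute.one_left A).smul_left c), smul_one_eq_diagonal,
    exp_diagonal, Pi.exp_def, ← Real.exp_eq_exp_ℝ, smul_eq_diagonal_mul]

end Matrix

theorem exp_offdiag_entry_lower_bound_general {h : ℕ} (Q : Matrix (Fin h) (Fin h) ℝ)
    (hoff : ∀ i j, i ≠ j → 0 ≤ Q i j) (M : ℝ) (hM : ∀ c, -Q c c ≤ M)
    (a b : Fin h) (hab : a ≠ b) (t : ℝ) (ht : 0 ≤ t) :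
    Q a b * t * Real.exp (-M * t) ≤ mexp (t • Q) a b := by
  set P := M • (1 : Matrix (Fin h) (Fin h) ℝ) + Q
  have hP : ∀ i j, 0 ≤ (t • P) i j := by
    intro i j
    refine mul_nonneg ht ?_
    rcases eq_or_ne i j with rfl | hij
    · simpa [P] using neg_le_iff_add_nonneg.mp (hM i)
    · simpa [P, one_apply_ne hij] using hoff i j hij
  have hsplit : t • Q = (-M * t) • 1 + t • P := by
    simp only [P, smul_add, smul_smul]
    module
  calc Q a b * t * Real.exp (-M * t) = Real.exp (-M * t) * (t • P) a b := by
        simp only [P, Matrix.smul_apply, Matrix.add_apply, one_apply_ne hab, smul_eq_mul, mul_zero, zero_add]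
        ring
    _ ≤ Real.exp (-M * t) * NormedSpace.exp (t • P) a b := by
        gcongr; exact apply_le_exp_apply_of_nonneg hP a b
    _ = mexp (t • Q) a b := by
        rw [mexp, hsplit, exp_smul_one_add]; rfl

/-- One-jump lower bound on off-diagonal transition probabilities: for a generator matrix
`Q` with all exit intensities bounded by `M`, `(exp (t • Q))_{ab} ≥ q_{ab} · t · exp(−M·t)`
for all `a ≠ b` and `t ≥ 0`. -/
theorem exp_offdiag_entry_lower_bound {h : ℕ} (Q : Matrix (Fin h) (Fin h) ℝ)
    (hoff : ∀ i j, i ≠ j → 0 ≤ Q i j) (hdiag : ∀ i, Q i i ≤ 0)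
    (hrow : ∀ i, ∑ j, Q i j = 0) (M : ℝ) (hM0 : 0 ≤ M) (hM : ∀ c, -Q c c ≤ M)
    (a b : Fin h) (hab : a ≠ b) (t : ℝ) (ht : 0 ≤ t) :
    Q a b * t * Real.exp (-M * t) ≤ mexp (t • Q) a b :=
  exp_offdiag_entry_lower_bound_general Q hoff M hM a b hab t ht
end
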